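/- arXiv:1705.06842 — 9 statements merged into one kernel-verified Lean document; each statement's English description precedes it below -/
import Mathlib

section
/- Let G be a group and φ an automorphism of G. If the twisted conjugacy class [e]_φ = {g⁻¹·φ(g) : g ∈ G} is a subgroup of G, then it is a normal subgroup of G. -/
/-! `[e]_φ` is the orbit of `1` under twisted conjugation `y ↦ g * y * (φ g)⁻¹`. If it is a
subgroup, it contains `g * 1 * (φ g)⁻¹` and hence its inverse `φ g * g⁻¹`, so
`g * y * g⁻¹ = (g * y * (φ g)⁻¹) * (φ g * g⁻¹)` lies in it for every `y` in it. -/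

/-- The twisted conjugacy class of the identity under the automorphism `φ`:
`[e]_φ = {g⁻¹ · φ(g) : g ∈ G}`. -/
def twistedClassAut {G : Type*} [Group G] (φ : G ≃* G) : Set G :=
  {y : G | ∃ g : G, y = g⁻¹ * φ g}

section TwistedClass

variable {G : Type*} [Group G] (φ : G ≃* G)

theorem one_mem_twistedClassAut : (1 : G) ∈ twistedClassAut φ :=
  ⟨1, by simp⟩

theorem mul_mul_inv_map_mem_twistedClassAut {y : G} (g : G) (hy : y ∈ twistedClassAut φ) :
    g * y * (φ g)⁻¹ ∈ twistedClassAut φ := by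
  obtain ⟨x, rfl⟩ := hy
  exact ⟨x * g⁻¹, by simp [mul_assoc]⟩

end TwistedClass

theorem stmt_2 {G : Type*} [Group G] (φ : G ≃* G) (H : Subgroup G)
    (hH : (H : Set G) = twistedClassAut φ) :
    H.Normal := by
  have mem_iff : ∀ y, y ∈ H ↔ y ∈ twistedClassAut φ := fun y => by rw [← hH, SetLike.mem_coe]
  refine ⟨fun y hy g => ?_⟩
  have twisted_conj : g * y * (φ g)⁻¹ ∈ H :=
    (mem_iff _).2 (mul_mul_inv_map_mem_twistedClassAut φ g ((mem_iff y).1 hy))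
  have twisted_one : g * 1 * (φ g)⁻¹ ∈ H :=
    (mem_iff _).2 (mul_mul_inv_map_mem_twistedClassAut φ g (one_mem_twistedClassAut φ))
  convert H.mul_mem twisted_conj (H.inv_mem twisted_one) using 1
  group
end

section
/- Let φ and ψ be automorphisms of a group G such that the twisted conjugacy classes [e]_φ = {g⁻¹·φ(g) : g ∈ G} and [e]_ψ = {g⁻¹·ψ(g) : g ∈ G} are subgroups of G. Then [e]_{φ∘ψ} is contained in the setwise product [e]_φ · [e]_ψ. -/
/-!
Writing `g⁻¹ φ(ψ g) = (g⁻¹ ψ g) · ((ψ g)⁻¹ φ(ψ g))` shows `[e]_{φ∘ψ} ⊆ [e]_ψ · [e]_φ` for any two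
automorphisms. Since `[e]_φ` is stable under twisted conjugation `h ↦ t⁻¹ h φ(t)`, once it is a
subgroup it also contains `t⁻¹ h φ(t) · (t⁻¹ φ(t))⁻¹ = t⁻¹ h t`, so it is normal, and the two
factors of the product may be swapped.
-/

open Pointwise

theorem twistedClassAut_trans_subset_mul {G : Type*} [Group G] (φ ψ : G ≃* G) :
    twistedClassAut (ψ.trans φ) ⊆ twistedClassAut ψ * twistedClassAut φ := by
  rintro _ ⟨g, rfl⟩
  refine ⟨g⁻¹ * ψ g, ⟨g, rfl⟩, (ψ g)⁻¹ * φ (ψ g), ⟨ψ g, rfl⟩, ?_⟩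
  simp only [MulEquiv.trans_apply]
  group

theorem Subgroup.normal_of_coe_eq_twistedClassAut {G : Type*} [Group G] {φ : G ≃* G}
    {H : Subgroup G} (hH : (H : Set G) = twistedClassAut φ) : H.Normal := by
  have mem : ∀ u : G, u⁻¹ * φ u ∈ H := fun u => by
    rw [← SetLike.mem_coe, hH]
    exact ⟨u, rfl⟩
  refine ⟨fun n hn t => ?_⟩
  obtain ⟨u, rfl⟩ : n ∈ twistedClassAut φ := hH ▸ hn
  have conj_eq : t * (u⁻¹ * φ u) * t⁻¹
      = (u * t⁻¹)⁻¹ * φ (u * t⁻¹) * (t⁻¹⁻¹ * φ t⁻¹)⁻¹ := by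
    simp only [map_mul, map_inv]
    group
  rw [conj_eq]
  exact H.mul_mem (mem _) (H.inv_mem (mem _))

theorem stmt_3_general {G : Type*} [Group G] (φ ψ : G ≃* G)
    (hφ : ∃ H : Subgroup G, (H : Set G) = twistedClassAut φ) :
    twistedClassAut (ψ.trans φ) ⊆ twistedClassAut φ * twistedClassAut ψ := by
  obtain ⟨H, hH⟩ := hφ
  have : H.Normal := Subgroup.normal_of_coe_eq_twistedClassAut hH
  calc twistedClassAut (ψ.trans φ) ⊆ twistedClassAut ψ * twistedClassAut φ :=
        twistedClassAut_trans_subset_mul φ ψ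
    _ = twistedClassAut φ * twistedClassAut ψ := by
        rw [← hH, Subgroup.set_mul_normal_comm]

theorem stmt_3 {G : Type*} [Group G] (φ ψ : G ≃* G)
    (hφ : ∃ H : Subgroup G, (H : Set G) = twistedClassAut φ)
    (hψ : ∃ H : Subgroup G, (H : Set G) = twistedClassAut ψ) :
    twistedClassAut (ψ.trans φ) ⊆ twistedClassAut φ * twistedClassAut ψ :=
  stmt_3_general φ ψ hφ
end

section
/- Let G be a group generated by elements x₁, …, x_n (with n ≥ 2) such that for every g in G the twisted conjugacy class [e]_g = {[x,g] : x ∈ G} is a subgroup of G. Then the derived subgroup γ₂(G) = [G,G] equals the setwise product [e]_{x₁} · [e]_{x₂} · … · [e]_{x_{n−1}}. -/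
open Pointwise
open scoped commutatorElement

/-- The twisted conjugacy class of the identity under the inner automorphism
induced by `g`: `[e]_g = {⁅x, g⁆ : x ∈ G}`. -/
def twistedClass {G : Type*} [Group G] (g : G) : Set G :=
  {y : G | ∃ x : G, y = ⁅x, g⁆}

/-!
If `[e]_g` is a subgroup `H`, then `H` is normal, because
`b ⁅c, g⁆ b⁻¹ = ⁅b c, g⁆ ⁅b, g⁆⁻¹`. A set product of normal subgroups is the subgroup they
generate, so the product of the `[e]_{x_i}`, `i < n - 1`, is a normal subgroup `N ≤ [G, G]`.
Modulo `N` the generators `x_i`, `i < n - 1`, are central, and the last generator commutes with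
itself, so `G ⧸ N` is abelian and `[G, G] ≤ N`.
-/

theorem iSup_fin_succ {α : Type*} [CompleteLattice α] {m : ℕ} (f : Fin (m + 1) → α) :
    ⨆ i, f i = f 0 ⊔ ⨆ i : Fin m, f i.succ :=
  le_antisymm (iSup_le (Fin.cases le_sup_left fun i => le_sup_of_le_right (le_iSup (f ·.succ) i)))
    (sup_le (le_iSup f 0) (iSup_le fun i => le_iSup f i.succ))

namespace Subgroup

variable {G : Type*} [Group G]

theorem coe_iSup_eq_prod_ofFn {m : ℕ} (H : Fin m → Subgroup G) [∀ i, (H i).Normal] :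
    ((⨆ i, H i : Subgroup G) : Set G) = (List.ofFn fun i => (H i : Set G)).prod := by
  induction m with
  | zero => simp only [iSup_of_empty, coe_bot, List.ofFn_zero, List.prod_nil, Set.singleton_one]
  | succ m ih => rw [iSup_fin_succ, mul_normal, ih, List.ofFn_succ, List.prod_cons]

theorem commutator_le_of_closure_eq_top {S : Set G} (hS : closure S = ⊤) (N : Subgroup G)
    [N.Normal] (h : ∀ s ∈ S, ∀ t ∈ S, ⁅s, t⁆ ∈ N) : _root_.commutator G ≤ N := by
  rw [← Normal.quotient_commutative_iff_commutator_le]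
  set f := QuotientGroup.mk' N
  have hclosure : closure (f '' S) = ⊤ := by
    rw [← MonoidHom.map_closure, hS, map_top_of_surjective f (QuotientGroup.mk'_surjective N)]
  have hcomm : ∀ a ∈ f '' S, ∀ b ∈ f '' S, a * b = b * a := by
    rintro _ ⟨s, hs, rfl⟩ _ ⟨t, ht, rfl⟩
    rw [← commutatorElement_eq_one_iff_mul_comm, ← map_commutatorElement, QuotientGroup.mk'_apply,
      QuotientGroup.eq_one_iff]
    exact h s hs t ht
  have := isMulCommutative_closure hcomm
  rw [hclosure] at this
  exact Function.Surjective.mul_comm (f := (⊤ : Subgroup (G ⧸ N)).subtype)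
    (fun a => ⟨⟨a, mem_top a⟩, rfl⟩) this

theorem commutatorElement_mem_of_compl_subsingleton {ι : Type*} {N : Subgroup G} {x : ι → G}
    (hx : {i | ∀ a : G, ⁅a, x i⁆ ∈ N}ᶜ.Subsingleton) (i j : ι) : ⁅x i, x j⁆ ∈ N := by
  by_cases hj : ∀ a : G, ⁅a, x j⁆ ∈ N
  · exact hj _
  by_cases hi : ∀ a : G, ⁅a, x i⁆ ∈ N
  · rw [← commutatorElement_inv]; exact inv_mem (hi _)
  rw [hx hi hj, commutatorElement_self]
  exact one_mem N

end Subgroup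

section twistedClass

variable {G : Type*} [Group G]

theorem commutatorElement_mem_twistedClass (a g : G) : ⁅a, g⁆ ∈ twistedClass g :=
  ⟨a, rfl⟩

theorem twistedClass_subset_commutator (g : G) : twistedClass g ⊆ commutator G := by
  rintro _ ⟨a, rfl⟩
  exact Subgroup.commutator_mem_commutator (Subgroup.mem_top a) (Subgroup.mem_top g)

theorem Subgroup.normal_of_coe_eq_twistedClass {g : G} {H : Subgroup G}
    (hH : (H : Set G) = twistedClass g) : H.Normal where
  conj_mem := by
    have hmem (a : G) : ⁅a, g⁆ ∈ H := by
      rw [← SetLike.mem_coe, hH]; exact commutatorElement_mem_twistedClass a g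
    rintro _ hc b
    obtain ⟨c, rfl⟩ : ∃ c : G, _ = ⁅c, g⁆ := by rwa [← SetLike.mem_coe, hH] at hc
    have hconj : b * ⁅c, g⁆ * b⁻¹ = ⁅b * c, g⁆ * ⁅b, g⁆⁻¹ := by
      simp only [commutatorElement_def]; group
    rw [hconj]
    exact mul_mem (hmem _) (inv_mem (hmem _))

end twistedClass

theorem stmt_6_general {G : Type*} [Group G] (n : ℕ) (x : Fin n → G)
    (hgen : Subgroup.closure (Set.range x) = ⊤)
    (h : ∀ g : G, ∃ H : Subgroup G, (H : Set G) = twistedClass g) :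
    (((⊤ : Subgroup G).lowerCentralSeries 1 : Subgroup G) : Set G) =
      (List.ofFn fun i : Fin (n - 1) => twistedClass (x (Fin.castLE (Nat.sub_le n 1) i))).prod := by
  choose H hH using h
  set K : Fin (n - 1) → Subgroup G := fun i => H (x (Fin.castLE (Nat.sub_le n 1) i))
  have hK (i) : (K i).Normal := Subgroup.normal_of_coe_eq_twistedClass (hH _)
  have hlow (j : Fin n) (hj : (j : ℕ) < n - 1) (a : G) : ⁅a, x j⁆ ∈ ⨆ i, K i :=
    Subgroup.mem_iSup_of_mem ⟨j, hj⟩ (by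
      rw [← SetLike.mem_coe, hH]; exact commutatorElement_mem_twistedClass a _)
  have hx : {j | ∀ a : G, ⁅a, x j⁆ ∈ ⨆ i, K i}ᶜ.Subsingleton := by
    intro j hj k hk
    have hj' : n - 1 ≤ j := not_lt.mp fun h => hj (hlow j h)
    have hk' : n - 1 ≤ k := not_lt.mp fun h => hk (hlow k h)
    exact Fin.ext (by omega)
  have hcomm : commutator G = ⨆ i, K i := le_antisymm
    (Subgroup.commutator_le_of_closure_eq_top hgen _ (by
      rintro _ ⟨i, rfl⟩ _ ⟨j, rfl⟩
      exact Subgroup.commutatorElement_mem_of_compl_subsingleton hx i j))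
    (iSup_le fun i => by
      rw [← SetLike.coe_subset_coe, hH]; exact twistedClass_subset_commutator _)
  rw [Subgroup.top_lowerCentralSeries_one, hcomm, Subgroup.coe_iSup_eq_prod_ofFn]
  simp only [K, hH]

theorem stmt_6 {G : Type*} [Group G] (n : ℕ) (hn : 2 ≤ n) (x : Fin n → G)
    (hgen : Subgroup.closure (Set.range x) = ⊤)
    (h : ∀ g : G, ∃ H : Subgroup G, (H : Set G) = twistedClass g) :
    (((⊤ : Subgroup G).lowerCentralSeries 1 : Subgroup G) : Set G) =
      (List.ofFn fun i : Fin (n - 1) => twistedClass (x (Fin.castLE (Nat.sub_le n 1) i))).prod :=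
  stmt_6_general n x hgen h
end

section
/- Let G be a group generated by elements x₁, …, x_n such that for every g in G the twisted conjugacy class [e]_g = {[x,g] : x ∈ G} is a subgroup of G. Suppose that for some k the k-th term of the lower central series satisfies γ_k(G) = [e]_{h₁} · [e]_{h₂} · … · [e]_{h_s} (a setwise product) for some elements h₁, …, h_s ∈ G. Setting p_{ij} = [x_i, h_j] for 1 ≤ i ≤ n and 1 ≤ j ≤ s, one has γ_{k+1}(G) = ∏_{i,j} [e]_{p_{ij}} (setwise product over all pairs (i,j)). -/
open Pointwise
open scoped commutatorElement

namespace Subgroup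

variable {G : Type*} [Group G]

section QuotientCommutator

variable {N : Subgroup G} [N.Normal]

theorem mem_comap_mk'_centralizer_iff {g a : G} :
    a ∈ (centralizer {(g : G ⧸ N)}).comap (QuotientGroup.mk' N) ↔ ⁅a, g⁆ ∈ N := by
  simp only [mem_comap, mem_centralizer_iff_commutator_eq_one', Set.mem_singleton_iff, forall_eq]
  rw [← QuotientGroup.mk'_apply, ← map_commutatorElement, QuotientGroup.mk'_apply,
    QuotientGroup.eq_one_iff]

theorem commutator_mem_of_mem_closure {S : Set G} {g a : G} (hS : ∀ s ∈ S, ⁅s, g⁆ ∈ N)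
    (ha : a ∈ closure S) : ⁅a, g⁆ ∈ N :=
  mem_comap_mk'_centralizer_iff.1 <|
    (closure_le _).2 (fun s hs => mem_comap_mk'_centralizer_iff.2 (hS s hs)) ha

theorem mem_comap_mk'_center_iff {g : G} :
    g ∈ (center (G ⧸ N)).comap (QuotientGroup.mk' N) ↔ ∀ z : G, ⁅z, g⁆ ∈ N := by
  rw [← centralizer_univ]
  simp only [mem_comap, mem_centralizer_iff_commutator_eq_one, Set.mem_univ, forall_const,
    QuotientGroup.mk_surjective.forall]
  refine forall_congr' fun z => ?_
  change ⁅QuotientGroup.mk' N z, QuotientGroup.mk' N g⁆ = 1 ↔ _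
  rw [← map_commutatorElement, QuotientGroup.mk'_apply, QuotientGroup.eq_one_iff]

theorem commutator_top_le_iff {H : Subgroup G} :
    ⁅H, ⊤⁆ ≤ N ↔ H ≤ (center (G ⧸ N)).comap (QuotientGroup.mk' N) := by
  rw [commutator_le, SetLike.le_def]
  refine forall₂_congr fun h _ => ?_
  simp only [mem_top, forall_const, mem_comap_mk'_center_iff]
  refine forall_congr' fun z => ?_
  rw [← inv_mem_iff, commutatorElement_inv]

end QuotientCommutator

section TwistedClass

variable {g : G} {H : Subgroup G}

theorem commutator_mem_of_coe_eq_twistedClass (hH : (H : Set G) = twistedClass g) (z : G) :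
    ⁅z, g⁆ ∈ H := by
  rw [← SetLike.mem_coe, hH]
  exact ⟨z, rfl⟩

theorem le_iff_of_coe_eq_twistedClass (hH : (H : Set G) = twistedClass g) {K : Subgroup G} :
    H ≤ K ↔ ∀ z : G, ⁅z, g⁆ ∈ K := by
  refine ⟨fun hle z => hle (commutator_mem_of_coe_eq_twistedClass hH z), fun hK a ha => ?_⟩
  rw [← SetLike.mem_coe, hH] at ha
  obtain ⟨z, rfl⟩ := ha
  exact hK z

theorem normal_of_coe_eq_twistedClass_s7 (hH : (H : Set G) = twistedClass g) : H.Normal := by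
  refine ⟨fun y hy a => ?_⟩
  rw [← SetLike.mem_coe, hH] at hy
  obtain ⟨z, rfl⟩ := hy
  have hconj : a * ⁅z, g⁆ * a⁻¹ = ⁅a * z, g⁆ * ⁅a, g⁆⁻¹ := by
    simp only [commutatorElement_def]; group
  rw [hconj]
  exact H.mul_mem (commutator_mem_of_coe_eq_twistedClass hH _)
    (H.inv_mem (commutator_mem_of_coe_eq_twistedClass hH _))

end TwistedClass

end Subgroup

theorem stmt_7_general {G : Type*} [Group G] (n : ℕ) (x : Fin n → G)
    (hgen : Subgroup.closure (Set.range x) = ⊤)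
    (h : ∀ g : G, ∃ H : Subgroup G, (H : Set G) = twistedClass g)
    (k : ℕ) (s : ℕ) (hfam : Fin s → G)
    (hγk : (((⊤ : Subgroup G).lowerCentralSeries k : Subgroup G) : Set G) =
      (List.ofFn fun j : Fin s => twistedClass (hfam j)).prod) :
    (((⊤ : Subgroup G).lowerCentralSeries (k + 1) : Subgroup G) : Set G) =
      (List.ofFn fun i : Fin n =>
        (List.ofFn fun j : Fin s => twistedClass ⁅x i, hfam j⁆).prod).prod := by
  choose T hT using h
  have : ∀ g, (T g).Normal := fun g => Subgroup.normal_of_coe_eq_twistedClass_s7 (hT g)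
  have hT_mem (g z : G) : ⁅z, g⁆ ∈ T g := Subgroup.commutator_mem_of_coe_eq_twistedClass (hT g) z
  have hT_le (g : G) : ∀ {K}, T g ≤ K ↔ ∀ z : G, ⁅z, g⁆ ∈ K :=
    Subgroup.le_iff_of_coe_eq_twistedClass (hT g)
  simp only [← hT, ← Subgroup.coe_iSup_eq_prod_ofFn] at hγk ⊢
  replace hγk := SetLike.coe_injective hγk
  congr 1
  apply le_antisymm
  · rw [Subgroup.lowerCentralSeries_succ, Subgroup.commutator_top_le_iff, hγk, iSup_le_iff]
    refine fun j => (hT_le _).2 fun a =>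
      Subgroup.commutator_mem_of_mem_closure ?_ (hgen ▸ Subgroup.mem_top a)
    rintro _ ⟨i, rfl⟩
    exact Subgroup.mem_comap_mk'_center_iff.2 fun z =>
      Subgroup.mem_iSup_of_mem i <| Subgroup.mem_iSup_of_mem j <| hT_mem _ z
  · refine iSup_le fun i => iSup_le fun j => (hT_le _).2 fun z => ?_
    have hp : ⁅x i, hfam j⁆ ∈ (⊤ : Subgroup G).lowerCentralSeries k :=
      hγk ▸ Subgroup.mem_iSup_of_mem j (hT_mem _ _)
    rw [Subgroup.lowerCentralSeries_succ, Subgroup.commutator_comm]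
    exact Subgroup.commutator_mem_commutator (Subgroup.mem_top z) hp

/-- `lowerCentralSeries G (k-1)` is the `k`-th term `γ_k(G)` of the lower central
series; here `γ_{k+1}(G) = lowerCentralSeries G k`. -/
theorem stmt_7 {G : Type*} [Group G] (n : ℕ) (x : Fin n → G)
    (hgen : Subgroup.closure (Set.range x) = ⊤)
    (h : ∀ g : G, ∃ H : Subgroup G, (H : Set G) = twistedClass g)
    (k : ℕ) (s : ℕ) (hs : 1 ≤ s) (hfam : Fin s → G)
    (hγk : (((⊤ : Subgroup G).lowerCentralSeries k : Subgroup G) : Set G) =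
      (List.ofFn fun j : Fin s => twistedClass (hfam j)).prod) :
    (((⊤ : Subgroup G).lowerCentralSeries (k + 1) : Subgroup G) : Set G) =
      (List.ofFn fun i : Fin n =>
        (List.ofFn fun j : Fin s => twistedClass ⁅x i, hfam j⁆).prod).prod :=
  stmt_7_general n x hgen h k s hfam hγk
end

section
/- Let G be a group generated by n elements (n ≥ 2) such that for every g in G the twisted conjugacy class [e]_g = {[x,g] : x ∈ G} is a subgroup of G. Then for every k ≥ 3, every element of γ_k(G) is a product of at most n^{k−2}(n−1)/2 elements, each of which is a left-normed commutator [g₁, g₂, …, g_k] of weight k (with g₁,…,g_k ∈ G) or the inverse of such a commutator. -/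
open scoped commutatorElement

/-- The left-normed iterated commutator: `leftNormed g k = [g 0, g 1, …, g k]`,
a commutator of weight `k + 1`. -/
def leftNormed {G : Type*} [Group G] (g : ℕ → G) : ℕ → G
  | 0 => g 0
  | k + 1 => ⁅leftNormed g k, g (k + 1)⁆

/-!
Write `N g` for the subgroup `[e]_g = {⁅x, g⁆ : x ∈ G}`. It is normal, and for normal `P` we have
`N g ≤ P` iff `g` is central modulo `P`. Since `{y | ⁅c, y⁆ is central modulo P}` is a subgroup, it
suffices to check generators: if `N ⁅c, s⁆ ≤ P` for every generator `s`, then `N c` lies in the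
preimage of `Z(G/P)`. Hence `γ_m ≤ ⨆_{c ∈ T} N c` implies `γ_{m+1} ≤ ⨆_{c ∈ T, s} N ⁅c, s⁆`.
Starting from `γ_3 ≤ ⨆_{i < j} N ⁅x_i, x_j⁆` (the other order is covered since
`⁅x_j, x_i⁆ = ⁅x_i, x_j⁆⁻¹`), this yields `n^{k-3} · n(n-1)/2` commutators `c` of weight `k - 1`
with `γ_k ≤ ⨆ N c`. As the `N c` are normal, every element of `γ_k` is a product of one element
`⁅z, c⁆ = ⁅c, z⁆⁻¹` from each.
-/

section LeftNormed

variable {G : Type*} [Group G]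

theorem leftNormed_congr {c c' : ℕ → G} {k : ℕ} (h : ∀ i ≤ k, c i = c' i) :
    leftNormed c k = leftNormed c' k := by
  induction k with
  | zero => simp only [leftNormed, h 0 le_rfl]
  | succ k ih => simp only [leftNormed, ih fun i hi => h i (by omega), h (k + 1) le_rfl]

def leftNormedCommutators (k : ℕ) : Set G :=
  Set.range fun c : ℕ → G => leftNormed c k

theorem mem_leftNormedCommutators_zero (y : G) : y ∈ leftNormedCommutators 0 :=
  ⟨fun _ => y, rfl⟩

theorem commutatorElement_mem_leftNormedCommutators_succ {k : ℕ} {y : G}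
    (hy : y ∈ leftNormedCommutators k) (z : G) : ⁅y, z⁆ ∈ leftNormedCommutators (k + 1) := by
  obtain ⟨c, rfl⟩ := hy
  refine ⟨Function.update c (k + 1) z, ?_⟩
  simp only [leftNormed, Function.update_self]
  congr 1
  exact leftNormed_congr fun i hi => Function.update_of_ne (by omega) _ _

def commutatorPairs : List G → List G
  | [] => []
  | a :: l => l.map (⁅a, ·⁆) ++ commutatorPairs l

theorem length_commutatorPairs (l : List G) : (commutatorPairs l).length = l.length.choose 2 := by
  induction l with
  | nil => rfl
  | cons a l ih => simp [commutatorPairs, ih, Nat.choose_succ_succ']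

theorem exists_eq_commutatorElement_of_mem_commutatorPairs {l : List G} {c : G}
    (hc : c ∈ commutatorPairs l) : ∃ a b : G, c = ⁅a, b⁆ := by
  induction l with
  | nil => simp [commutatorPairs] at hc
  | cons a l ih =>
    rcases List.mem_append.1 hc with hc | hc
    · obtain ⟨b, -, rfl⟩ := List.mem_map.1 hc
      exact ⟨a, b, rfl⟩
    · exact ih hc

theorem eq_or_commutatorElement_mem_commutatorPairs {l : List G} {a b : G} (ha : a ∈ l)
    (hb : b ∈ l) : a = b ∨ ⁅a, b⁆ ∈ commutatorPairs l ∨ ⁅b, a⁆ ∈ commutatorPairs l := by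
  induction l with
  | nil => simp at ha
  | cons c l ih =>
    simp only [List.mem_cons] at ha hb
    simp only [commutatorPairs, List.mem_append, List.mem_map]
    rcases ha with rfl | ha <;> rcases hb with rfl | hb
    · exact Or.inl rfl
    · exact Or.inr (Or.inl (Or.inl ⟨b, hb, rfl⟩))
    · exact Or.inr (Or.inr (Or.inl ⟨a, ha, rfl⟩))
    · rcases ih ha hb with hab | hab | hba
      · exact Or.inl hab
      · exact Or.inr (Or.inl (Or.inr hab))
      · exact Or.inr (Or.inr (Or.inr hba))

end LeftNormed

namespace Subgroup

variable {G : Type*} [Group G]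

instance upperCentralSeriesStep_normal (K : Subgroup G) [K.Normal] :
    (upperCentralSeriesStep K).Normal := by
  rw [upperCentralSeriesStep_eq_comap_center]
  infer_instance

theorem top_lowerCentralSeries_succ_le_iff {K : Subgroup G} [K.Normal] {m : ℕ} :
    (⊤ : Subgroup G).lowerCentralSeries (m + 1) ≤ K ↔
      (⊤ : Subgroup G).lowerCentralSeries m ≤ upperCentralSeriesStep K := by
  rw [lowerCentralSeries_succ, commutator_le]
  exact ⟨fun h a ha b => h a ha b (mem_top b), fun h a ha b _ => h ha b⟩

theorem mem_upperCentralSeriesStep_of_closure_eq_top {K : Subgroup G} [hK : K.Normal] {S : Set G}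
    (hS : closure S = ⊤) {c : G} (hc : ∀ s ∈ S, ⁅c, s⁆ ∈ K) : c ∈ upperCentralSeriesStep K := by
  intro y
  induction (hS ▸ mem_top y : y ∈ closure S) using closure_induction with
  | mem s hs => exact hc s hs
  | one => simp [K.one_mem]
  | mul y z _ _ hy hz =>
    have : ⁅c, y * z⁆ = ⁅c, y⁆ * (y * ⁅c, z⁆ * y⁻¹) := by group
    rw [this]
    exact mul_mem hy (hK.conj_mem _ hz y)
  | inv y _ hy =>
    have : ⁅c, y⁻¹⁆ = y⁻¹ * ⁅c, y⁆⁻¹ * y⁻¹⁻¹ := by group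
    rw [this]
    exact hK.conj_mem _ (inv_mem hy) y⁻¹

theorem exists_list_prod_eq_of_mem_biSup {ι : Type*} (H : ι → Subgroup G) [∀ i, (H i).Normal]
    (T : List ι) {g : G} (hg : g ∈ ⨆ i ∈ T, H i) :
    ∃ ws : List G, ws.length = T.length ∧ (∀ w ∈ ws, ∃ i ∈ T, w ∈ H i) ∧ ws.prod = g := by
  induction T generalizing g with
  | nil => exact ⟨[], rfl, by simp, (by simpa using hg : g = 1).symm⟩
  | cons i T ih =>
    have hcons : ⨆ j ∈ i :: T, H j = H i ⊔ ⨆ j ∈ T, H j := by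
      simp [iSup_or, iSup_sup_eq]
    rw [hcons, mem_sup_of_normal_left] at hg
    obtain ⟨w, hw, r, hr, rfl⟩ := hg
    obtain ⟨ws, hlen, hws, rfl⟩ := ih hr
    refine ⟨w :: ws, by simp [hlen], ?_, rfl⟩
    rintro v (_ | ⟨_, hv⟩)
    · exact ⟨i, List.mem_cons_self, hw⟩
    · obtain ⟨j, hj, hvj⟩ := hws v hv
      exact ⟨j, List.mem_cons_of_mem i hj, hvj⟩

end Subgroup

section Twisted

open Subgroup

variable {G : Type*} [Group G] (h : ∀ g : G, ∃ H : Subgroup G, (H : Set G) = twistedClass g)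

noncomputable def twistedSubgroup (g : G) : Subgroup G :=
  (h g).choose.copy (twistedClass g) (h g).choose_spec.symm

theorem commutatorElement_mem_twistedSubgroup_right (x g : G) : ⁅x, g⁆ ∈ twistedSubgroup h g :=
  ⟨x, rfl⟩

theorem commutatorElement_mem_twistedSubgroup_left (g y : G) : ⁅g, y⁆ ∈ twistedSubgroup h g := by
  rw [← commutatorElement_inv]
  exact inv_mem (commutatorElement_mem_twistedSubgroup_right h y g)

instance twistedSubgroup_normal (g : G) : (twistedSubgroup h g).Normal where
  conj_mem := by
    rintro _ ⟨x, rfl⟩ z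
    have : z * ⁅x, g⁆ * z⁻¹ = ⁅z * x, g⁆ * ⁅z, g⁆⁻¹ := by group
    rw [this]
    exact mul_mem (commutatorElement_mem_twistedSubgroup_right h _ g)
      (inv_mem (commutatorElement_mem_twistedSubgroup_right h z g))

theorem twistedSubgroup_le_iff {P : Subgroup G} [P.Normal] {g : G} :
    twistedSubgroup h g ≤ P ↔ g ∈ P.upperCentralSeriesStep := by
  refine ⟨fun hle y => hle (commutatorElement_mem_twistedSubgroup_left h g y), ?_⟩
  rintro hg _ ⟨x, rfl⟩
  rw [← commutatorElement_inv]
  exact inv_mem (hg x)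

theorem mem_upperCentralSeriesStep_biSup_twistedSubgroup {T : List G} {c : G} (hc : c ∈ T) :
    c ∈ (⨆ d ∈ T, twistedSubgroup h d).upperCentralSeriesStep :=
  (twistedSubgroup_le_iff h).1 (le_iSup₂ (f := fun d (_ : d ∈ T) => twistedSubgroup h d) c hc)

variable {xs : List G} (hgen : closure {s | s ∈ xs} = ⊤)

include hgen

theorem top_lowerCentralSeries_one_le :
    (⊤ : Subgroup G).lowerCentralSeries 1 ≤ ⨆ s ∈ xs, twistedSubgroup h s := by
  rw [top_lowerCentralSeries_succ_le_iff, Subgroup.lowerCentralSeries_zero, top_le_iff,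
    eq_top_iff, ← hgen, closure_le]
  exact fun s hs => mem_upperCentralSeriesStep_biSup_twistedSubgroup h hs

theorem top_lowerCentralSeries_succ_le {m : ℕ} {T : List G}
    (hT : (⊤ : Subgroup G).lowerCentralSeries m ≤ ⨆ c ∈ T, twistedSubgroup h c)
    {P : Subgroup G} [P.Normal] (hP : ∀ c ∈ T, ∀ s ∈ xs, ⁅c, s⁆ ∈ P.upperCentralSeriesStep) :
    (⊤ : Subgroup G).lowerCentralSeries (m + 1) ≤ P := by
  rw [top_lowerCentralSeries_succ_le_iff]
  refine hT.trans (iSup₂_le fun c hc => ?_)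
  exact (twistedSubgroup_le_iff h).2 (mem_upperCentralSeriesStep_of_closure_eq_top hgen (hP c hc))

theorem top_lowerCentralSeries_two_le :
    (⊤ : Subgroup G).lowerCentralSeries 2 ≤ ⨆ c ∈ commutatorPairs xs, twistedSubgroup h c := by
  refine top_lowerCentralSeries_succ_le h hgen (top_lowerCentralSeries_one_le h hgen)
    fun a ha b hb => ?_
  rcases eq_or_commutatorElement_mem_commutatorPairs ha hb with rfl | hab | hba
  · rw [commutatorElement_self]
    exact one_mem _
  · exact mem_upperCentralSeriesStep_biSup_twistedSubgroup h hab
  · rw [← commutatorElement_inv]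
    exact inv_mem (mem_upperCentralSeriesStep_biSup_twistedSubgroup h hba)

theorem exists_list_top_lowerCentralSeries_le (m : ℕ) :
    ∃ T : List G, T.length = xs.length ^ m * xs.length.choose 2 ∧
      (∀ c ∈ T, c ∈ leftNormedCommutators (m + 1)) ∧
      (⊤ : Subgroup G).lowerCentralSeries (m + 2) ≤ ⨆ c ∈ T, twistedSubgroup h c := by
  induction m with
  | zero =>
    refine ⟨commutatorPairs xs, by simp [length_commutatorPairs], fun c hc => ?_,
      top_lowerCentralSeries_two_le h hgen⟩
    obtain ⟨a, b, rfl⟩ := exists_eq_commutatorElement_of_mem_commutatorPairs hc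
    exact commutatorElement_mem_leftNormedCommutators_succ (mem_leftNormedCommutators_zero a) b
  | succ m ih =>
    obtain ⟨T, hlen, hweight, hle⟩ := ih
    refine ⟨T.flatMap fun c => xs.map (⁅c, ·⁆), ?_, ?_,
      top_lowerCentralSeries_succ_le h hgen hle fun c hc s hs =>
        mem_upperCentralSeriesStep_biSup_twistedSubgroup h
          (List.mem_flatMap.2 ⟨c, hc, List.mem_map_of_mem hs⟩)⟩
    · simp only [List.length_flatMap, List.length_map, List.map_const', List.sum_replicate,
        smul_eq_mul, hlen]
      ring
    · simp only [List.mem_flatMap, List.mem_map]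
      rintro _ ⟨c, hc, s, -, rfl⟩
      exact commutatorElement_mem_leftNormedCommutators_succ (hweight c hc) s

end Twisted

theorem stmt_9_general {G : Type*} [Group G] (n : ℕ) (x : Fin n → G)
    (hgen : Subgroup.closure (Set.range x) = ⊤)
    (h : ∀ g : G, ∃ H : Subgroup G, (H : Set G) = twistedClass g)
    (k : ℕ) (hk : 3 ≤ k) :
    ∀ g ∈ (⊤ : Subgroup G).lowerCentralSeries (k - 1), ∃ l : List G,
      l.length ≤ n ^ (k - 2) * (n - 1) / 2 ∧
      (∀ y ∈ l, ∃ c : ℕ → G, y = leftNormed c (k - 1) ∨ y = (leftNormed c (k - 1))⁻¹) ∧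
      l.prod = g := by
  intro g hg
  have hxs : Subgroup.closure {s | s ∈ List.ofFn x} = ⊤ := by
    rwa [show {s | s ∈ List.ofFn x} = Set.range x from Set.ext (List.mem_ofFn' x)]
  obtain ⟨T, hlen, hweight, hle⟩ := exists_list_top_lowerCentralSeries_le h hxs (k - 3)
  rw [show k - 3 + 2 = k - 1 by omega] at hle
  obtain ⟨ws, hws, hmem, rfl⟩ := Subgroup.exists_list_prod_eq_of_mem_biSup _ T (hle hg)
  refine ⟨ws, ?_, fun w hw => ?_, rfl⟩
  · rw [hws, hlen, List.length_ofFn, Nat.choose_two_right, show k - 2 = k - 3 + 1 by omega,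
      pow_succ, mul_assoc]
    exact Nat.mul_div_le_mul_div_assoc _ _ _
  · obtain ⟨c, hc, z, rfl⟩ := hmem w hw
    obtain ⟨e, he : leftNormed e (k - 3 + 1 + 1) = ⁅c, z⁆⟩ :=
      commutatorElement_mem_leftNormedCommutators_succ (hweight c hc) z
    refine ⟨e, Or.inr ?_⟩
    rw [show k - 1 = k - 3 + 1 + 1 by omega, he, commutatorElement_inv]

theorem stmt_9 {G : Type*} [Group G] (n : ℕ) (hn : 2 ≤ n) (x : Fin n → G)
    (hgen : Subgroup.closure (Set.range x) = ⊤)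
    (h : ∀ g : G, ∃ H : Subgroup G, (H : Set G) = twistedClass g)
    (k : ℕ) (hk : 3 ≤ k) :
    ∀ g ∈ (⊤ : Subgroup G).lowerCentralSeries (k - 1), ∃ l : List G,
      l.length ≤ n ^ (k - 2) * (n - 1) / 2 ∧
      (∀ y ∈ l, ∃ c : ℕ → G, y = leftNormed c (k - 1) ∨ y = (leftNormed c (k - 1))⁻¹) ∧
      l.prod = g :=
  stmt_9_general n x hgen h k hk
end

section
/- Let G be a metabelian group (i.e. [G,G] is abelian) generated by n elements (n ≥ 2) such that for every g in G the twisted conjugacy class [e]_g = {[x,g] : x ∈ G} is a subgroup of G. Then for every k ≥ 1, every element of γ_{k+2}(G) is a product of at most (n(n−1)/2)·C(n+k−2, k−1) elements, each of which is a left-normed commutator [g₁, …, g_{k+2}] of weight k+2 (with g₁,…,g_{k+2} ∈ G) or the inverse of such a commutator, where C(n+k−2, k−1) denotes the binomial coefficient. -/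
open scoped commutatorElement

/-!
In a metabelian group the commutator subgroup `G'` is abelian and conjugation acts on it through
`G / G'`. Hence for `u ∈ G'` the iterated commutator `u ↦ [u, y₁, …, yᵣ]` is a homomorphism on `G'`
that commutes with conjugation and does not depend on the order of the `yᵢ`. By induction on `k`,
`γ_{k+2}` is generated by the images `A_κ` of the subgroups `H_{ij} = [e]_{[xᵢ, xⱼ]}` (`j < i`)
under `u ↦ [u, x_{l₁}, …, x_{l_{k-1}}]`, one for each multiset `{l₁, …, l_{k-1}}`. Each `A_κ` is a
subgroup whose elements are single commutators `[xᵢ, xⱼ, z, x_{l₁}, …, x_{l_{k-1}}]`, and all of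
them lie in the abelian group `G'`, so every element of `γ_{k+2}` is a product of one element from
each `A_κ`; there are `n(n-1)/2 · C(n+k-2, k-1)` indices `κ`.
-/

def IsMetabelian (G : Type*) [Group G] : Prop :=
  ∀ a ∈ commutator G, ∀ b ∈ commutator G, a * b = b * a

section

variable {G : Type*} [Group G]

theorem commutatorElement_mem_commutator (a b : G) : ⁅a, b⁆ ∈ commutator G :=
  Subgroup.commutator_mem_commutator (Subgroup.mem_top a) (Subgroup.mem_top b)

namespace Subgroup

theorem commutator_closure_le {N : Subgroup G} [N.Normal] {S T : Set G}
    (h : ∀ s ∈ S, ∀ t ∈ T, ⁅s, t⁆ ∈ N) : ⁅closure S, closure T⁆ ≤ N := by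
  rw [← QuotientGroup.ker_mk' N, ← map_eq_bot_iff, map_commutator, MonoidHom.map_closure,
    MonoidHom.map_closure, commutator_eq_bot_iff_le_centralizer, centralizer_closure,
    closure_le]
  rintro _ ⟨s, hs, rfl⟩ _ ⟨t, ht, rfl⟩
  refine (commutatorElement_eq_one_iff_mul_comm.mp ?_).symm
  rw [← map_commutatorElement]
  exact (QuotientGroup.eq_one_iff _).mpr (h s hs t ht)

theorem exists_list_of_mem_iSup_of_commute {ι : Type*} [Fintype ι] {H : ι → Subgroup G}
    (hcomm : Pairwise fun i j => ∀ x y : G, x ∈ H i → y ∈ H j → Commute x y) {g : G}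
    (hg : g ∈ ⨆ i, H i) :
    ∃ l : List G, l.length = Fintype.card ι ∧ (∀ y ∈ l, ∃ i, y ∈ H i) ∧ l.prod = g := by
  classical
  rw [← noncommPiCoprod_range (hcomm := hcomm)] at hg
  obtain ⟨u, rfl⟩ := hg
  refine ⟨Finset.univ.toList.map (fun i => (u i : G)), by simp, ?_, ?_⟩
  · simp only [List.mem_map]
    rintro _ ⟨i, -, rfl⟩
    exact ⟨i, (u i).2⟩
  · rw [noncommPiCoprod_apply]
    unfold Finset.noncommProd
    simp only [← Finset.coe_toList, Multiset.map_coe, Multiset.noncommProd_coe]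

variable {c : G} {H : Subgroup G} (hH : (H : Set G) = twistedClass c)
include hH

theorem commutatorElement_mem_of_coe_eq_twistedClass (z : G) : ⁅z, c⁆ ∈ H := by
  rw [← SetLike.mem_coe, hH]
  exact ⟨z, rfl⟩

theorem exists_eq_commutatorElement_of_coe_eq_twistedClass {u : G} (hu : u ∈ H) :
    ∃ z, u = ⁅c, z⁆ := by
  obtain ⟨z, hz⟩ : u⁻¹ ∈ twistedClass c := hH ▸ inv_mem hu
  exact ⟨z, by rw [← commutatorElement_inv, ← hz, inv_inv]⟩

theorem normal_of_coe_eq_twistedClass_s10 : H.Normal := by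
  refine ⟨fun u hu g => ?_⟩
  obtain ⟨z, rfl⟩ : u ∈ twistedClass c := hH ▸ hu
  have key : g * ⁅z, c⁆ * g⁻¹ = ⁅g * z, c⁆ * ⁅g, c⁆⁻¹ := by
    simp only [commutatorElement_def]; group
  rw [key]
  exact mul_mem (commutatorElement_mem_of_coe_eq_twistedClass hH _)
    (inv_mem (commutatorElement_mem_of_coe_eq_twistedClass hH _))

theorem commutatorElement_conj_mem_of_coe_eq_twistedClass (w z : G) :
    ⁅w * c * w⁻¹, z⁆ ∈ H := by
  have key : ⁅w * c * w⁻¹, z⁆ = w * ⁅w⁻¹ * z * w, c⁆⁻¹ * w⁻¹ := by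
    simp only [commutatorElement_def]; group
  rw [key]
  exact (normal_of_coe_eq_twistedClass_s10 hH).conj_mem _
    (inv_mem (commutatorElement_mem_of_coe_eq_twistedClass hH _)) w

end Subgroup

def iterCommutator (u : G) (L : List G) : G :=
  L.foldl (fun v y => ⁅v, y⁆) u

@[simp] theorem iterCommutator_cons (u a : G) (L : List G) :
    iterCommutator u (a :: L) = iterCommutator ⁅u, a⁆ L := rfl

theorem iterCommutator_append (u : G) (L₁ L₂ : List G) :
    iterCommutator u (L₁ ++ L₂) = iterCommutator (iterCommutator u L₁) L₂ :=
  List.foldl_append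

theorem iterCommutator_mem_commutator {u : G} (hu : u ∈ commutator G) (L : List G) :
    iterCommutator u L ∈ commutator G := by
  induction L generalizing u with
  | nil => exact hu
  | cons a L ih => exact ih (commutatorElement_mem_commutator u a)

theorem exists_leftNormed_eq_iterCommutator (c : ℕ → G) (m : ℕ) (L : List G) :
    ∃ c' : ℕ → G, leftNormed c' (m + L.length) = iterCommutator (leftNormed c m) L := by
  induction L generalizing c m with
  | nil => exact ⟨c, rfl⟩
  | cons a L ih =>
    have hupdate : ∀ t ≤ m, leftNormed (Function.update c (m + 1) a) t = leftNormed c t := by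
      intro t ht
      induction t with
      | zero => exact Function.update_of_ne (Nat.zero_ne_add_one m) a c
      | succ t iht =>
        simp only [leftNormed]
        rw [iht (by omega), Function.update_of_ne (by omega : t + 1 ≠ m + 1)]
    obtain ⟨c', hc'⟩ := ih (Function.update c (m + 1) a) (m + 1)
    refine ⟨c', ?_⟩
    rw [iterCommutator_cons, List.length_cons, ← add_assoc, add_right_comm, hc', leftNormed,
      hupdate m le_rfl, Function.update_self]

namespace IsMetabelian

variable (hG : IsMetabelian G)
include hG

theorem conj_eq_self {a z : G} (ha : a ∈ commutator G) (hz : z ∈ commutator G) :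
    a * z * a⁻¹ = z := by
  rw [hG a ha z hz, mul_inv_cancel_right]

theorem commutatorElement_mul_left {a : G} (ha : a ∈ commutator G) (b y : G) :
    ⁅a * b, y⁆ = ⁅a, y⁆ * ⁅b, y⁆ := by
  have hby : ⁅b, y⁆ ∈ commutator G := commutatorElement_mem_commutator b y
  calc ⁅a * b, y⁆ = a * ⁅b, y⁆ * a⁻¹ * ⁅a, y⁆ := by simp only [commutatorElement_def]; group
    _ = ⁅a, y⁆ * ⁅b, y⁆ := by
      rw [hG.conj_eq_self ha hby, hG _ hby _ (commutatorElement_mem_commutator a y)]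

theorem commutatorElement_inv_left {a : G} (ha : a ∈ commutator G) (y : G) :
    ⁅a⁻¹, y⁆ = ⁅a, y⁆⁻¹ := by
  rw [eq_inv_iff_mul_eq_one, ← hG.commutatorElement_mul_left (inv_mem ha), inv_mul_cancel,
    commutatorElement_one_left]

theorem commutatorElement_mul_right_of_mem {u d : G} (hu : u ∈ commutator G)
    (hd : d ∈ commutator G) (y : G) : ⁅u, y * d⁆ = ⁅u, y⁆ := by
  calc ⁅u, y * d⁆ = u * y * (d * u⁻¹ * d⁻¹) * y⁻¹ := by simp only [commutatorElement_def]; group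
    _ = ⁅u, y⁆ := by rw [hG.conj_eq_self hd (inv_mem hu), commutatorElement_def]

theorem commutatorElement_conj_left {u : G} (hu : u ∈ commutator G) (g y : G) :
    ⁅g * u * g⁻¹, y⁆ = g * ⁅u, y⁆ * g⁻¹ := by
  calc ⁅g * u * g⁻¹, y⁆ = g * ⁅u, y * ⁅y⁻¹, g⁻¹⁆⁆ * g⁻¹ := by
        simp only [commutatorElement_def]; group
    _ = g * ⁅u, y⁆ * g⁻¹ := by
      rw [hG.commutatorElement_mul_right_of_mem hu (commutatorElement_mem_commutator _ _)]

theorem commutatorElement_commutatorElement_comm {u : G} (hu : u ∈ commutator G) (a b : G) :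
    ⁅⁅u, a⁆, b⁆ = ⁅⁅u, b⁆, a⁆ := by
  calc ⁅⁅u, a⁆, b⁆ = ⁅u * (a * u⁻¹ * a⁻¹), b⁆ := by
        rw [show ⁅u, a⁆ = u * (a * u⁻¹ * a⁻¹) by rw [commutatorElement_def]; group]
    _ = ⁅u, b⁆ * (a * ⁅u, b⁆⁻¹ * a⁻¹) := by
      rw [hG.commutatorElement_mul_left hu, hG.commutatorElement_conj_left (inv_mem hu),
        hG.commutatorElement_inv_left hu]
    _ = ⁅⁅u, b⁆, a⁆ := by simp only [commutatorElement_def]; group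

theorem iterCommutator_mul {u v : G} (hu : u ∈ commutator G) (hv : v ∈ commutator G)
    (L : List G) : iterCommutator (u * v) L = iterCommutator u L * iterCommutator v L := by
  induction L generalizing u v with
  | nil => rfl
  | cons a L ih =>
    rw [iterCommutator_cons, hG.commutatorElement_mul_left hu,
      ih (commutatorElement_mem_commutator u a) (commutatorElement_mem_commutator v a)]
    rfl

theorem iterCommutator_conj {u : G} (hu : u ∈ commutator G) (g : G) (L : List G) :
    iterCommutator (g * u * g⁻¹) L = g * iterCommutator u L * g⁻¹ := by
  induction L generalizing u with
  | nil => rfl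
  | cons a L ih =>
    rw [iterCommutator_cons, hG.commutatorElement_conj_left hu,
      ih (commutatorElement_mem_commutator u a), iterCommutator_cons]

theorem iterCommutator_perm {L₁ L₂ : List G} (hL : L₁.Perm L₂) {u : G}
    (hu : u ∈ commutator G) : iterCommutator u L₁ = iterCommutator u L₂ := by
  induction hL generalizing u with
  | nil => rfl
  | cons a _ ih => exact ih (commutatorElement_mem_commutator u a)
  | swap a b L =>
    simp only [iterCommutator_cons, hG.commutatorElement_commutatorElement_comm hu]
  | trans _ _ ih₁ ih₂ => exact (ih₁ hu).trans (ih₂ hu)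

def iterCommutatorHom (L : List G) : commutator G →* G :=
  MonoidHom.mk' (fun u => iterCommutator (u : G) L) fun u v => hG.iterCommutator_mul u.2 v.2 L

def iterCommutatorSubgroup (H : Subgroup G) (L : List G) : Subgroup G :=
  (H.subgroupOf (commutator G)).map (hG.iterCommutatorHom L)

theorem mem_iterCommutatorSubgroup {H : Subgroup G} {L : List G} {y : G} :
    y ∈ hG.iterCommutatorSubgroup H L ↔ ∃ u ∈ H, u ∈ commutator G ∧ iterCommutator u L = y := by
  simp [iterCommutatorSubgroup, iterCommutatorHom, Subgroup.mem_subgroupOf]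

theorem iterCommutatorSubgroup_le_commutator (H : Subgroup G) (L : List G) :
    hG.iterCommutatorSubgroup H L ≤ commutator G := by
  rintro _ ⟨u, -, rfl⟩
  exact iterCommutator_mem_commutator u.2 L

theorem iterCommutatorSubgroup_normal {H : Subgroup G} (hH : H.Normal) (L : List G) :
    (hG.iterCommutatorSubgroup H L).Normal := by
  refine ⟨fun y hy g => ?_⟩
  obtain ⟨u, hu, hu', rfl⟩ := hG.mem_iterCommutatorSubgroup.mp hy
  exact hG.mem_iterCommutatorSubgroup.mpr ⟨g * u * g⁻¹, hH.conj_mem u hu g,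
    (Subgroup.commutator_normal ⊤ ⊤).conj_mem u hu' g, hG.iterCommutator_conj hu' g L⟩

theorem iterCommutatorSubgroup_perm (H : Subgroup G) {L₁ L₂ : List G} (hL : L₁.Perm L₂) :
    hG.iterCommutatorSubgroup H L₁ = hG.iterCommutatorSubgroup H L₂ := by
  ext y
  simp only [mem_iterCommutatorSubgroup]
  exact exists_congr fun u => and_congr_right fun _ => and_congr_right fun hu => by
    rw [hG.iterCommutator_perm hL hu]

theorem commutatorElement_mem_iterCommutatorSubgroup_append {H : Subgroup G} {L : List G}
    {s : G} (hs : s ∈ hG.iterCommutatorSubgroup H L) (y : G) :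
    ⁅s, y⁆ ∈ hG.iterCommutatorSubgroup H (L ++ [y]) := by
  obtain ⟨u, hu, hu', rfl⟩ := hG.mem_iterCommutatorSubgroup.mp hs
  exact hG.mem_iterCommutatorSubgroup.mpr ⟨u, hu, hu', iterCommutator_append u L [y]⟩

end IsMetabelian

-- A pair `j < i` of generator indices and a multiset of `m` further indices.
abbrev BasicIndex (n m : ℕ) : Type := (Σ i : Fin n, Fin i) × Sym (Fin n) m

theorem card_basicIndex (n m : ℕ) :
    Fintype.card (BasicIndex n m) = n * (n - 1) / 2 * (n + m - 1).choose m := by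
  rw [Fintype.card_prod, Fintype.card_sigma, Sym.card_sym_eq_choose, Fintype.card_fin]
  simp only [Fintype.card_fin]
  rw [Fin.sum_univ_eq_sum_range (fun i => i) n, Finset.sum_range_id]

section Generators

variable {n : ℕ} (x : Fin n → G)

def basicCommutator (p : Σ i : Fin n, Fin i) : G :=
  ⁅x p.1, x (p.2.castLE p.1.2.le)⁆

theorem commutatorElement_mem_normalClosure_basicCommutator (i j : Fin n) :
    ⁅x i, x j⁆ ∈ Subgroup.normalClosure (Set.range (basicCommutator x)) := by
  have hlt : ∀ i j : Fin n, j < i →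
      ⁅x i, x j⁆ ∈ Subgroup.normalClosure (Set.range (basicCommutator x)) :=
    fun i j hji => Subgroup.subset_normalClosure ⟨⟨i, ⟨j, hji⟩⟩, rfl⟩
  rcases lt_trichotomy j i with hji | rfl | hij
  · exact hlt i j hji
  · rw [commutatorElement_self]
    exact one_mem _
  · rw [← commutatorElement_inv]
    exact inv_mem (hlt j i hij)

theorem commutator_le_normalClosure_basicCommutator
    (hgen : Subgroup.closure (Set.range x) = ⊤) :
    commutator G ≤ Subgroup.normalClosure (Set.range (basicCommutator x)) := by
  rw [commutator_def, ← hgen]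
  refine Subgroup.commutator_closure_le ?_
  rintro _ ⟨i, rfl⟩ _ ⟨j, rfl⟩
  exact commutatorElement_mem_normalClosure_basicCommutator x i j

variable (hG : IsMetabelian G) (H : G → Subgroup G)

noncomputable def basicSubgroup {m : ℕ} (κ : BasicIndex n m) : Subgroup G :=
  hG.iterCommutatorSubgroup (H (basicCommutator x κ.1)) ((κ.2 : Multiset (Fin n)).toList.map x)

theorem iterCommutatorSubgroup_le_iSup_basicSubgroup (p : Σ i : Fin n, Fin i)
    {L : List (Fin n)} {m : ℕ} (hL : L.length = m) :
    hG.iterCommutatorSubgroup (H (basicCommutator x p)) (L.map x) ≤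
      ⨆ κ : BasicIndex n m, basicSubgroup x hG H κ := by
  refine le_iSup_of_le (p, ⟨L, hL⟩) (le_of_eq ?_)
  refine hG.iterCommutatorSubgroup_perm _ (List.Perm.map x ?_)
  exact Multiset.coe_eq_coe.mp (Multiset.coe_toList _).symm

variable (hH : ∀ g, (H g : Set G) = twistedClass g)
include hH

-- Mathlib's lower central series starts at index `0`, so this is `γ_{m+3}`.
theorem lowerCentralSeries_le_iSup_basicSubgroup (hgen : Subgroup.closure (Set.range x) = ⊤)
    (m : ℕ) :
    (⊤ : Subgroup G).lowerCentralSeries (m + 2) ≤ ⨆ κ : BasicIndex n m, basicSubgroup x hG H κ := by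
  have hnormal (m : ℕ) (κ : BasicIndex n m) : (basicSubgroup x hG H κ).Normal :=
    hG.iterCommutatorSubgroup_normal (Subgroup.normal_of_coe_eq_twistedClass_s10 (hH _)) _
  induction m with
  | zero =>
    rw [Subgroup.lowerCentralSeries_succ, Subgroup.top_lowerCentralSeries_one]
    refine (Subgroup.commutator_mono (commutator_le_normalClosure_basicCommutator x hgen)
      hgen.ge).trans ?_
    refine Subgroup.commutator_closure_le ?_
    rintro s hs _ ⟨l, rfl⟩
    obtain ⟨_, ⟨p, rfl⟩, hconj⟩ := Group.mem_conjugatesOfSet_iff.mp hs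
    obtain ⟨w, rfl⟩ := isConj_iff.mp hconj
    refine iterCommutatorSubgroup_le_iSup_basicSubgroup x hG H p (L := []) rfl ?_
    refine hG.mem_iterCommutatorSubgroup.mpr ⟨_, ?_, commutatorElement_mem_commutator _ _, rfl⟩
    exact Subgroup.commutatorElement_conj_mem_of_coe_eq_twistedClass (hH _) w _
  | succ m ih =>
    rw [Subgroup.lowerCentralSeries_succ]
    refine (Subgroup.commutator_mono ih hgen.ge).trans ?_
    rw [Subgroup.iSup_eq_closure]
    refine Subgroup.commutator_closure_le ?_
    rintro s hs _ ⟨l, rfl⟩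
    obtain ⟨κ, hκ⟩ := Set.mem_iUnion.mp hs
    have := hG.commutatorElement_mem_iterCommutatorSubgroup_append hκ (x l)
    rw [← List.map_singleton (f := x), ← List.map_append] at this
    refine iterCommutatorSubgroup_le_iSup_basicSubgroup x hG H κ.1 ?_ this
    simp

theorem exists_leftNormed_of_mem_basicSubgroup {m : ℕ} {κ : BasicIndex n m} {y : G}
    (hy : y ∈ basicSubgroup x hG H κ) : ∃ c : ℕ → G, y = leftNormed c (m + 2) := by
  obtain ⟨u, hu, -, rfl⟩ := hG.mem_iterCommutatorSubgroup.mp hy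
  obtain ⟨z, rfl⟩ := Subgroup.exists_eq_commutatorElement_of_coe_eq_twistedClass (hH _) hu
  have hL : ((κ.2 : Multiset (Fin n)).toList.map x).length = m := by simp
  obtain ⟨c, hc⟩ := exists_leftNormed_eq_iterCommutator (fun _ => x κ.1.1) 0
    (x (κ.1.2.castLE κ.1.1.2.le) :: z :: (κ.2 : Multiset (Fin n)).toList.map x)
  rw [List.length_cons, List.length_cons, hL, zero_add] at hc
  exact ⟨c, hc.symm⟩

end Generators

end

theorem stmt_10_general {G : Type*} [Group G] (n : ℕ) (x : Fin n → G)
    (hgen : Subgroup.closure (Set.range x) = ⊤)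
    (hmeta : ∀ a ∈ commutator G, ∀ b ∈ commutator G, a * b = b * a)
    (h : ∀ g : G, ∃ H : Subgroup G, (H : Set G) = twistedClass g)
    (k : ℕ) (hk : 1 ≤ k) :
    ∀ g ∈ (⊤ : Subgroup G).lowerCentralSeries (k + 1), ∃ l : List G,
      l.length ≤ n * (n - 1) / 2 * Nat.choose (n + k - 2) (k - 1) ∧
      (∀ y ∈ l, ∃ c : ℕ → G, y = leftNormed c (k + 1) ∨ y = (leftNormed c (k + 1))⁻¹) ∧
      l.prod = g := by
  intro g hg
  obtain ⟨m, rfl⟩ : ∃ m, k = m + 1 := ⟨k - 1, by omega⟩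
  have hG : IsMetabelian G := hmeta
  choose H hH using h
  have hcomm : Pairwise fun κ κ' : BasicIndex n m => ∀ a b : G,
      a ∈ basicSubgroup x hG H κ → b ∈ basicSubgroup x hG H κ' → Commute a b :=
    fun _ _ _ a b ha hb => hG a (hG.iterCommutatorSubgroup_le_commutator _ _ ha)
      b (hG.iterCommutatorSubgroup_le_commutator _ _ hb)
  obtain ⟨l, hlen, hl, rfl⟩ := Subgroup.exists_list_of_mem_iSup_of_commute hcomm
    (lowerCentralSeries_le_iSup_basicSubgroup x hG H hH hgen m hg)
  refine ⟨l, ?_, fun y hy => ?_, rfl⟩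
  · rw [hlen, card_basicIndex, show n + (m + 1) - 2 = n + m - 1 by omega, Nat.add_sub_cancel]
  · obtain ⟨κ, hκ⟩ := hl y hy
    obtain ⟨c, hc⟩ := exists_leftNormed_of_mem_basicSubgroup x hG H hH hκ
    exact ⟨c, Or.inl hc⟩

theorem stmt_10 {G : Type*} [Group G] (n : ℕ) (hn : 2 ≤ n) (x : Fin n → G)
    (hgen : Subgroup.closure (Set.range x) = ⊤)
    (hmeta : ∀ a ∈ commutator G, ∀ b ∈ commutator G, a * b = b * a)
    (h : ∀ g : G, ∃ H : Subgroup G, (H : Set G) = twistedClass g)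
    (k : ℕ) (hk : 1 ≤ k) :
    ∀ g ∈ (⊤ : Subgroup G).lowerCentralSeries (k + 1), ∃ l : List G,
      l.length ≤ n * (n - 1) / 2 * Nat.choose (n + k - 2) (k - 1) ∧
      (∀ y ∈ l, ∃ c : ℕ → G, y = leftNormed c (k + 1) ∨ y = (leftNormed c (k + 1))⁻¹) ∧
      l.prod = g :=
  stmt_10_general n x hgen hmeta h k hk
end

section
/- Let p be an odd prime, let G be a finite group with a normal abelian p-subgroup A such that the quotient G/A is cyclic of order pⁿ, and let t ∈ G be an element whose image in G/A generates G/A. If for every automorphism φ of G the twisted conjugacy class [e]_φ = {g⁻¹·φ(g) : g ∈ G} is a subgroup of G, then t⁻¹at = a for every a ∈ A with aᵖ = e. -/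
/-
Suppose `t` moves some `a₀ ∈ Ω₁(A)`. Conjugation by `t` is an automorphism of the `𝔽_p`-space
`Ω₁(A)` whose `p ^ n`-th power is trivial, so it is unipotent, and going down a Jordan chain gives
`a ∈ Ω₁(A)` with `t⁻¹ a t = a y ^ 2`, where `y ≠ 1` is fixed by `t` (the square root exists as `p`
is odd). Then `S k = a ^ k y ^ (k (k + 1))` satisfies the cocycle identity for `⟨t⟩` acting on `A`
and only depends on `k` modulo `p`, so `g ↦ g S (E g)`, with `E g` a discrete logarithm of `gA` in
`G ⧸ A = ⟨tA⟩`, is an automorphism `φ` with `[e]_φ = {S k}`. This set is not a subgroup: comparing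
`S 1 * S 1 = S k` with its conjugate by `t` forces `k ≡ 2` and `k (k + 1) ≡ 4 (mod p)`, so `p ∣ 2`.
-/

theorem AddMonoid.End.exists_apply_ne_zero_and_apply_apply_eq_zero {N : Type*}
    [AddCommMonoid N] {u : AddMonoid.End N} (hu : IsNilpotent u) {v : N} (hv : u v ≠ 0) :
    ∃ w, u w ≠ 0 ∧ u (u w) = 0 := by
  obtain ⟨k, hk⟩ := hu
  replace hk : (u ^ k) v = 0 := by rw [hk]; rfl
  induction k generalizing v with
  | zero => exact absurd (by simpa using congr_arg u hk) hv
  | succ k ih =>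
    by_cases huv : u (u v) = 0
    · exact ⟨v, hv, huv⟩
    · exact ih huv (by rwa [pow_succ] at hk)

theorem AddMonoid.End.charP_of_nsmul_eq_zero {N : Type*} [AddCommGroup N] [Nontrivial N]
    {p : ℕ} [Fact p.Prime] (h : ∀ x : N, p • x = 0) : CharP (AddMonoid.End N) p where
  cast_eq_zero_iff k := by
    obtain ⟨x, hx⟩ := exists_ne (0 : N)
    refine ⟨fun hk => ?_, ?_⟩
    · rw [← addOrderOf_eq_prime (h x) hx]
      exact addOrderOf_dvd_of_nsmul_eq_zero (by simpa using congr($hk x))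
    · rintro ⟨m, rfl⟩
      ext x
      simp [h]

theorem CommGroup.exists_apply_ne_self_and_fixed {M : Type*} [CommGroup M] {p : ℕ}
    [Fact p.Prime] (hM : ∀ m : M, m ^ p = 1) {σ : Monoid.End M} {n : ℕ} (hσ : σ ^ p ^ n = 1)
    {v : M} (hv : σ v ≠ v) : ∃ w, σ w ≠ w ∧ σ (w⁻¹ * σ w) = w⁻¹ * σ w := by
  let f := monoidEndToAdditive M σ
  have : Nontrivial (Additive M) := ⟨⟨Additive.ofMul v, 0, fun h => hv (by simp_all)⟩⟩
  have := AddMonoid.End.charP_of_nsmul_eq_zero (N := Additive M) (p := p) (fun x => hM x.toMul)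
  have hnil : (f - 1) ^ p ^ n = 0 := by
    rw [sub_pow_char_pow_of_commute _ _ (Commute.one_right f), one_pow, ← map_pow, hσ, map_one,
      sub_self]
  have hf : ∀ w : M, (f - 1) (.ofMul w) = .ofMul (w⁻¹ * σ w) := fun w => by
    rw [mul_comm, ← div_eq_mul_inv]; rfl
  obtain ⟨w, hw, hfw⟩ := AddMonoid.End.exists_apply_ne_zero_and_apply_apply_eq_zero ⟨_, hnil⟩
    (v := .ofMul v) (by rwa [hf, ne_eq, ofMul_eq_zero, inv_mul_eq_one, eq_comm])
  rw [← ofMul_toMul w, hf, hf, ofMul_eq_zero, inv_mul_eq_one, eq_comm] at hfw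
  rw [← ofMul_toMul w, hf, ne_eq, ofMul_eq_zero, inv_mul_eq_one, eq_comm] at hw
  exact ⟨w.toMul, hw, hfw⟩

section

variable {G : Type*} [Group G]

def Subgroup.omegaOne (A : Subgroup G) [IsMulCommutative A] (p : ℕ) : Subgroup G where
  carrier := {g | g ∈ A ∧ g ^ p = 1}
  one_mem' := ⟨A.one_mem, one_pow p⟩
  mul_mem' ha hb := ⟨A.mul_mem ha.1 hb.1, by
    rw [Commute.mul_pow (setLike_mul_comm ha.1 hb.1), ha.2, hb.2, one_mul]⟩
  inv_mem' ha := ⟨A.inv_mem ha.1, by rw [inv_pow, ha.2, inv_one]⟩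

namespace Subgroup.omegaOne

variable (A : Subgroup G) [IsMulCommutative A] (p : ℕ)

instance [A.Normal] : (A.omegaOne p).Normal where
  conj_mem g hg c := ⟨‹A.Normal›.conj_mem g hg.1 c, by rw [conj_pow, hg.2, mul_one, mul_inv_cancel]⟩

instance : IsMulCommutative (A.omegaOne p) :=
  ⟨⟨fun v w => Subtype.ext (setLike_mul_comm v.2.1 w.2.1)⟩⟩

end Subgroup.omegaOne

open ConjAct in
open scoped IsMulCommutative in
theorem exists_conj_eq_mul_sq (A : Subgroup G) [A.Normal] [IsMulCommutative A] {p : ℕ}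
    [Fact p.Prime] (hodd : Odd p) {t : G} {n : ℕ} (ht : t ^ p ^ n ∈ A) {a₀ : G} (ha₀ : a₀ ∈ A)
    (hpa₀ : a₀ ^ p = 1) (hne : t⁻¹ * a₀ * t ≠ a₀) :
    ∃ a ∈ A, ∃ y ∈ A, a ^ p = 1 ∧ orderOf y = p ∧ t⁻¹ * a * t = a * y ^ 2 ∧ Commute t y := by
  let σ : Monoid.End (A.omegaOne p) :=
    MulDistribMulAction.toMonoidEnd (ConjAct G) (A.omegaOne p) (toConjAct t⁻¹)
  have hσ_apply (v) : (σ v : G) = t⁻¹ * v * t := by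
    change toConjAct t⁻¹ • (v : G) = _
    rw [toConjAct_smul, inv_inv]
  have hσ : σ ^ p ^ n = 1 := by
    rw [← map_pow, ← map_pow]
    ext v
    change toConjAct (t⁻¹ ^ p ^ n) • (v : G) = v
    rw [toConjAct_smul, inv_pow, inv_inv, mul_assoc, setLike_mul_comm v.2.1 ht,
      inv_mul_cancel_left]
  have hV (v : A.omegaOne p) : v ^ p = 1 := Subtype.ext v.2.2
  obtain ⟨w, hw, hx⟩ := CommGroup.exists_apply_ne_self_and_fixed hV hσ
    (v := ⟨a₀, ha₀, hpa₀⟩) (fun h => hne (by simpa [hσ_apply] using congr_arg Subtype.val h))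
  obtain ⟨m, hm⟩ := hodd
  set x := w⁻¹ * σ w
  set y := x ^ (m + 1)
  have hy : y ^ 2 = x := by
    rw [← pow_mul, show (m + 1) * 2 = p + 1 by omega, pow_succ, hV, one_mul]
  refine ⟨w, w.2.1, y, y.2.1, w.2.2, orderOf_eq_prime y.2.2 ?_, ?_, ?_⟩
  · intro h
    have : x = 1 := by rw [← hy, show y = 1 from Subtype.ext h, one_pow]
    exact hw (inv_mul_eq_one.mp this).symm
  · have : σ w = w * y ^ 2 := by rw [hy, mul_inv_cancel_left]
    simpa [hσ_apply] using congr_arg Subtype.val this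
  · have := congr_arg Subtype.val (show σ y = y by rw [map_pow, hx])
    rw [hσ_apply, mul_assoc, inv_mul_eq_iff_eq_mul] at this
    exact this.symm

theorem exists_mulEquiv_twistedClassAut_eq_range [Finite G] (A : Subgroup G) {s : G → G}
    (hs : ∀ g h, s (g * h) = h⁻¹ * s g * h * s h) (hsA : ∀ g, s g ∈ A)
    (hs_mk : ∀ g h : G, (g : G ⧸ A) = h → s g = s h) :
    ∃ φ : G ≃* G, twistedClassAut φ = Set.range s := by
  let φ : G →* G :=
    { toFun g := g * s g
      map_one' := by
        have h1 := hs 1 1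
        simp only [mul_one, inv_one, one_mul, left_eq_mul] at h1
        rw [h1, mul_one]
      map_mul' g h := by simp only [hs]; group }
  have hφ : Function.Injective φ := by
    intro g h (hgh : g * s g = h * s h)
    have hs_eq : s g = s h := hs_mk g h <| QuotientGroup.eq.mpr <| by
      rw [show g⁻¹ * h = s g * (s h)⁻¹ by rw [eq_mul_inv_iff_mul_eq, mul_assoc, ← hgh]; group]
      exact A.mul_mem (hsA g) (A.inv_mem (hsA h))
    rwa [hs_eq, mul_left_inj] at hgh
  refine ⟨MulEquiv.ofBijective φ (Finite.injective_iff_bijective.mp hφ), ?_⟩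
  ext y
  simp [twistedClassAut, φ, eq_comm]

theorem conj_eq_conj_of_mk_eq (A : Subgroup G) [A.Normal] [IsMulCommutative A] {g h : G}
    (hgh : (g : G ⧸ A) = h) {x : G} (hx : x ∈ A) : g⁻¹ * x * g = h⁻¹ * x * h := by
  obtain ⟨c, hc, rfl⟩ : ∃ c ∈ A, h = g * c := ⟨g⁻¹ * h, QuotientGroup.eq.mp hgh, by group⟩
  have : g⁻¹ * x * g ∈ A := by simpa using ‹A.Normal›.conj_mem x hx g⁻¹
  calc g⁻¹ * x * g = c⁻¹ * (g⁻¹ * x * g * c) := by rw [setLike_mul_comm this hc]; group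
    _ = (g * c)⁻¹ * x * (g * c) := by group

open QuotientGroup in
theorem exists_mulEquiv_twistedClassAut_eq_range_of_zpowers_eq_top [Finite G] (A : Subgroup G)
    [A.Normal] [IsMulCommutative A] {t : G} (ht : Subgroup.zpowers (t : G ⧸ A) = ⊤) {S : ℤ → G}
    (hSA : ∀ k, S k ∈ A) (hS : ∀ k j, S (k + j) = (t ^ j)⁻¹ * S k * t ^ j * S j)
    (hS_mk : ∀ k j, (t : G ⧸ A) ^ k = (t : G ⧸ A) ^ j → S k = S j) :
    ∃ φ : G ≃* G, twistedClassAut φ = Set.range S := by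
  choose E hE using fun g : G => Subgroup.mem_zpowers_iff.mp (ht ▸ Subgroup.mem_top (g : G ⧸ A))
  have hs (g h : G) : S (E (g * h)) = h⁻¹ * S (E g) * h * S (E h) := by
    have hmk : ((t ^ E h : G) : G ⧸ A) = h := by rw [mk_zpow, hE]
    rw [hS_mk _ (E g + E h) (by rw [zpow_add, hE, hE, hE, mk_mul]), hS,
      conj_eq_conj_of_mk_eq A hmk (hSA _)]
  obtain ⟨φ, hφ⟩ := exists_mulEquiv_twistedClassAut_eq_range A (s := S ∘ E) hs
    (fun g => hSA _) (fun g h hgh => hS_mk _ _ (by rw [hE, hE, hgh]))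
  refine ⟨φ, hφ.trans (Set.Subset.antisymm (Set.range_comp_subset_range E S) ?_)⟩
  rintro _ ⟨k, rfl⟩
  exact ⟨t ^ k, hS_mk _ _ (by rw [hE, mk_zpow])⟩

theorem zpow_eq_zpow_of_intCast_eq {g : G} {p : ℕ} (hg : g ^ p = 1) {i j : ℤ}
    (h : (i : ZMod p) = j) : g ^ i = g ^ j :=
  zpow_eq_zpow_iff_modEq.mpr <| ((ZMod.intCast_eq_intCast_iff _ _ _).mp h).of_dvd <|
    Int.natCast_dvd_natCast.mpr (orderOf_dvd_of_pow_eq_one hg)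

theorem zpow_eq_zpow_iff_intCast_eq {g : G} {p : ℕ} (hg : orderOf g = p) {i j : ℤ} :
    g ^ i = g ^ j ↔ (i : ZMod p) = j := by
  rw [zpow_eq_zpow_iff_modEq, hg, ZMod.intCast_eq_intCast_iff]

section QuadraticCocycle

variable {t a y : G}

theorem Commute.zpow_mul_zpow_mul_zpow_mul_zpow (hay : Commute a y) (i l i' l' : ℤ) :
    a ^ i * y ^ l * (a ^ i' * y ^ l') = a ^ (i + i') * y ^ (l + l') := by
  rw [mul_assoc, ← mul_assoc (y ^ l), ((hay.zpow_zpow i' l).symm).eq]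
  group

theorem zpow_inv_mul_mul_zpow_of_conj_eq_mul_sq (hay : Commute a y) (hty : Commute t y)
    (hta : t⁻¹ * a * t = a * y ^ 2) (j : ℤ) : (t ^ j)⁻¹ * a * t ^ j = a * y ^ (2 * j) := by
  have h : SemiconjBy a t (t * y ^ 2) := by
    rw [SemiconjBy, mul_assoc, ← (hay.pow_right 2).eq, ← hta]; group
  have hj := h.zpow_right j
  rw [SemiconjBy, (hty.pow_right 2).mul_zpow, ← zpow_natCast, ← zpow_mul] at hj
  rw [mul_assoc, hj, (hay.zpow_right _).eq]
  group

theorem zpow_inv_mul_zpow_mul_zpow_mul_zpow_of_conj_eq_mul_sq (hay : Commute a y)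
    (hty : Commute t y) (hta : t⁻¹ * a * t = a * y ^ 2) (i l j : ℤ) :
    (t ^ j)⁻¹ * (a ^ i * y ^ l) * t ^ j = a ^ i * y ^ l * y ^ (2 * j * i) := by
  have ha : (t ^ j)⁻¹ * a ^ i * t ^ j = ((t ^ j)⁻¹ * a * t ^ j) ^ i := by
    simpa using (conj_zpow (i := i) (a := (t ^ j)⁻¹) (b := a)).symm
  have hy : (t ^ j)⁻¹ * y ^ l * t ^ j = y ^ l := by
    rw [mul_assoc, ← (hty.zpow_zpow j l).eq, inv_mul_cancel_left]
  calc (t ^ j)⁻¹ * (a ^ i * y ^ l) * t ^ j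
      = ((t ^ j)⁻¹ * a ^ i * t ^ j) * ((t ^ j)⁻¹ * y ^ l * t ^ j) := by group
    _ = a ^ i * y ^ l * y ^ (2 * j * i) := by
        rw [ha, hy, zpow_inv_mul_mul_zpow_of_conj_eq_mul_sq hay hty hta,
          (hay.zpow_right _).mul_zpow, ← zpow_mul]
        group

/-- If `t⁻¹ a t = a y ^ 2`, then `quadraticCocycle a y k = t⁻ᵏ (a t)ᵏ`: the exponent `k (k + 1)` is
`2 (1 + ⋯ + k)`, and working with `y` rather than `y ^ 2` avoids halving it. -/
def quadraticCocycle (a y : G) (k : ℤ) : G := a ^ k * y ^ (k * (k + 1))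

theorem quadraticCocycle_add (hay : Commute a y) (hty : Commute t y)
    (hta : t⁻¹ * a * t = a * y ^ 2) (k j : ℤ) :
    quadraticCocycle a y (k + j) =
      (t ^ j)⁻¹ * quadraticCocycle a y k * t ^ j * quadraticCocycle a y j := by
  rw [quadraticCocycle, quadraticCocycle, quadraticCocycle,
    zpow_inv_mul_zpow_mul_zpow_mul_zpow_of_conj_eq_mul_sq hay hty hta, mul_assoc (a ^ k),
    ← zpow_add, hay.zpow_mul_zpow_mul_zpow_mul_zpow]
  ring_nf

theorem quadraticCocycle_eq_of_intCast_eq {p : ℕ} (ha : a ^ p = 1) (hy : y ^ p = 1) {k j : ℤ}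
    (h : (k : ZMod p) = j) : quadraticCocycle a y k = quadraticCocycle a y j := by
  rw [quadraticCocycle, quadraticCocycle, zpow_eq_zpow_of_intCast_eq ha h,
    zpow_eq_zpow_of_intCast_eq hy (i := k * (k + 1)) (j := j * (j + 1)) (by push_cast; rw [h])]

theorem intCast_eq_of_zpow_mul_zpow_eq {p : ℕ} [Fact p.Prime] (hp2 : p ≠ 2) (hay : Commute a y)
    (hty : Commute t y) (hta : t⁻¹ * a * t = a * y ^ 2) (ha : a ^ p = 1) (hy : orderOf y = p)
    {i l i' l' : ℤ} (h : a ^ i * y ^ l = a ^ i' * y ^ l') :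
    (i : ZMod p) = i' ∧ (l : ZMod p) = l' := by
  have h2 : (2 : ZMod p) ≠ 0 := Ring.two_ne_zero (by rwa [ZMod.ringChar_zmod_n])
  have hconj := zpow_inv_mul_zpow_mul_zpow_mul_zpow_of_conj_eq_mul_sq hay hty hta i l 1
  rw [h, zpow_inv_mul_zpow_mul_zpow_mul_zpow_of_conj_eq_mul_sq hay hty hta, mul_right_inj,
    zpow_eq_zpow_iff_intCast_eq hy] at hconj
  push_cast at hconj
  have hi : (i : ZMod p) = i' := mul_left_cancel₀ h2 (by simpa using hconj.symm)
  rw [zpow_eq_zpow_of_intCast_eq ha hi, mul_right_inj, zpow_eq_zpow_iff_intCast_eq hy] at h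
  exact ⟨hi, h⟩

theorem quadraticCocycle_one_mul_self_notMem_range {p : ℕ} [Fact p.Prime] (hp2 : p ≠ 2)
    (hay : Commute a y) (hty : Commute t y) (hta : t⁻¹ * a * t = a * y ^ 2) (ha : a ^ p = 1)
    (hy : orderOf y = p) :
    quadraticCocycle a y 1 * quadraticCocycle a y 1 ∉ Set.range (quadraticCocycle a y) := by
  rintro ⟨k, hk⟩
  rw [quadraticCocycle, quadraticCocycle, hay.zpow_mul_zpow_mul_zpow_mul_zpow] at hk
  obtain ⟨h1, h2⟩ := intCast_eq_of_zpow_mul_zpow_eq hp2 hay hty hta ha hy hk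
  push_cast at h1 h2
  exact Ring.two_ne_zero (by rwa [ZMod.ringChar_zmod_n]) (by linear_combination h2 - (k + 3) * h1)

end QuadraticCocycle

end

theorem stmt_17_general {G : Type*} [Group G] [Finite G] (p : ℕ) (hp : p.Prime) (hodd : Odd p)
    (A : Subgroup G) (hA : A.Normal)
    (hcomm : ∀ a ∈ A, ∀ b ∈ A, a * b = b * a)
    (n : ℕ) (hcard : Nat.card (G ⧸ A) = p ^ n)
    (t : G) (ht : Subgroup.zpowers (QuotientGroup.mk t : G ⧸ A) = ⊤)
    (h : ∀ φ : G ≃* G, ∃ H : Subgroup G, (H : Set G) = twistedClassAut φ) :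
    ∀ a ∈ A, a ^ p = 1 → t⁻¹ * a * t = a := by
  intro a₀ ha₀ hpa₀
  have : Fact p.Prime := ⟨hp⟩
  have : IsMulCommutative A := ⟨⟨fun a b => Subtype.ext (hcomm _ a.2 _ b.2)⟩⟩
  have horder : orderOf (t : G ⧸ A) = p ^ n := by
    rw [← Nat.card_zpowers, ht, Subgroup.card_top, hcard]
  obtain rfl | hn := n.eq_zero_or_pos
  · have htA : t ∈ A := by
      rw [← QuotientGroup.eq_one_iff, ← orderOf_eq_one_iff, horder, pow_zero]
    rw [mul_assoc, setLike_mul_comm ha₀ htA, inv_mul_cancel_left]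
  by_contra hne
  have htA : t ^ p ^ n ∈ A := by
    rw [← QuotientGroup.eq_one_iff, QuotientGroup.mk_pow, ← horder, pow_orderOf_eq_one]
  obtain ⟨a, ha, y, hy, hpa, hoy, hta, hty⟩ := exists_conj_eq_mul_sq A hodd htA ha₀ hpa₀ hne
  have hay : Commute a y := setLike_mul_comm ha hy
  have hpy : y ^ p = 1 := hoy ▸ pow_orderOf_eq_one y
  have hp2 : p ≠ 2 := by rintro rfl; exact absurd hodd (by decide)
  have hmk (k j : ℤ) (hkj : (t : G ⧸ A) ^ k = (t : G ⧸ A) ^ j) : (k : ZMod p) = j := by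
    rw [zpow_eq_zpow_iff_modEq, horder, Nat.cast_pow] at hkj
    exact (ZMod.intCast_eq_intCast_iff _ _ _).mpr (hkj.of_dvd (dvd_pow_self _ hn.ne'))
  obtain ⟨φ, hφ⟩ := exists_mulEquiv_twistedClassAut_eq_range_of_zpowers_eq_top A ht
    (fun k => A.mul_mem (A.zpow_mem ha _) (A.zpow_mem hy _)) (quadraticCocycle_add hay hty hta)
    (fun k j hkj => quadraticCocycle_eq_of_intCast_eq hpa hpy (hmk k j hkj))
  obtain ⟨H, hH⟩ := h φ
  rw [hφ] at hH
  have hS1 : quadraticCocycle a y 1 ∈ H := by rw [← SetLike.mem_coe, hH]; exact ⟨1, rfl⟩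
  exact quadraticCocycle_one_mul_self_notMem_range hp2 hay hty hta hpa hoy
    (hH ▸ H.mul_mem hS1 hS1)

theorem stmt_17 {G : Type*} [Group G] [Finite G] (p : ℕ) (hp : p.Prime) (hodd : Odd p)
    (A : Subgroup G) (hA : A.Normal) (hpgroup : IsPGroup p A)
    (hcomm : ∀ a ∈ A, ∀ b ∈ A, a * b = b * a)
    (n : ℕ) (hcard : Nat.card (G ⧸ A) = p ^ n)
    (t : G) (ht : Subgroup.zpowers (QuotientGroup.mk t : G ⧸ A) = ⊤)
    (h : ∀ φ : G ≃* G, ∃ H : Subgroup G, (H : Set G) = twistedClassAut φ) :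
    ∀ a ∈ A, a ^ p = 1 → t⁻¹ * a * t = a :=
  stmt_17_general p hp hodd A hA hcomm n hcard t ht h
end

section
/- Let p be an odd prime, let G be a finite group with a normal abelian p-subgroup A such that the quotient G/A is cyclic of order pⁿ, and let t ∈ G be an element whose image in G/A generates G/A. Suppose that for every automorphism φ of G the twisted conjugacy class [e]_φ = {g⁻¹·φ(g) : g ∈ G} is a subgroup of G. Define θ: A → A by θ(a) = a⁻¹·(t⁻¹at). Then θ is a group homomorphism, θ(a)^{pⁿ} = e for every a ∈ A, and for every 1 ≤ k ≤ n and every a ∈ A with a^{p^k} = e one has θ(a)^{p^{k−1}} = e. -/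
/-!
On the abelian normal subgroup `A`, `θ = ψ - 1` where `ψ` is conjugation by `t`.

For `a ∈ A` the twisted class of the inner automorphism `conj a` is `{g⁻¹ a g a⁻¹}`: a subgroup of
`A` whose elements depend only on `gA`, hence a `p`-group of order at most `|G/A| = pⁿ`. It contains
`θ(a)`, so `θ(a)^{pⁿ} = 1`.

Since `θ` is a homomorphism, the last claim reduces to `t` centralising `Ω₁(A)`. As `ψ^{pⁿ} = 1`
on `A`, `(ψ - 1)^{pⁿ} ≡ ψ^{pⁿ} - 1 = 0` on `Ω₁(A)`; so otherwise some `a ∈ Ω₁(A)` has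
`x = θ(a) ≠ 1` fixed by `t`. Then `t ↦ ta`, identity on `A`, extends to an automorphism `σ` with
`[e]_σ = {t⁻ⁱ(ta)ⁱ} = {aⁱ x^{i(i-1)/2}}`. This set contains `a`; if it also contained `a²`,
comparing with its conjugate by `t` would force `i ≡ 2 (mod p)` and `p ∣ i(i-1)/2`, which is
impossible for odd `p`.
-/

theorem Nat.not_dvd_choose_two_of_modEq_two {p i : ℕ} (hp : p.Prime) (hodd : Odd p)
    (hi : i ≡ 2 [MOD p]) : ¬ p ∣ i.choose 2 := by
  intro hdvd
  have hp3 : 3 ≤ p := by obtain ⟨k, hk⟩ := hodd; have := hp.two_le; omega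
  obtain ⟨q, rfl⟩ : ∃ q, i = 2 + p * q := ⟨i / p, by
    have := Nat.mod_add_div i p; rw [hi, Nat.mod_eq_of_lt (by omega)] at this; omega⟩
  have h2 : 2 * (2 + p * q).choose 2 = 2 + p * (3 * q + p * q ^ 2) := by
    rw [Nat.choose_two_right, Nat.mul_div_cancel' (Nat.even_mul_pred_self _).two_dvd,
      show 2 + p * q - 1 = 1 + p * q by omega]
    ring
  have : p ∣ 2 := (Nat.dvd_add_left (dvd_mul_right p _)).1 (h2 ▸ dvd_mul_of_dvd_right hdvd 2)
  have := Nat.le_of_dvd two_pos this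
  omega

theorem exists_iterate_apply_ne_and_apply_apply_eq {α : Type*} {f : α → α} {c : α}
    (hc : f c = c) {N : ℕ} {a : α} (hN : f^[N] a = c) (ha : f a ≠ c) :
    ∃ j, f (f^[j] a) ≠ c ∧ f (f (f^[j] a)) = c := by
  induction N generalizing a with
  | zero => exact absurd (hN ▸ hc) ha
  | succ N ih =>
    by_cases hfa : f (f a) = c
    · exact ⟨0, ha, hfa⟩
    · obtain ⟨j, hj⟩ := ih hN hfa
      exact ⟨j + 1, hj⟩

theorem iterate_div_id_eq_one_of_pow_prime_eq_one {M : Type*} [CommGroup M] {p : ℕ}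
    (hp : p.Prime) (hodd : Odd p) (ψ : M →* M) (e : ℕ) {x : M} (hx : x ^ p = 1)
    (hψx : ψ^[p ^ e] x = x) : (⇑(ψ / MonoidHom.id M))^[p ^ e] x = 1 := by
  let f : AddMonoid.End (Additive M) := ψ.toAdditive
  -- `(f - 1)^{pᵉ} = f^{pᵉ} - 1 + p·r`, and `p·r` kills `x`.
  obtain ⟨r, hr⟩ := (Commute.one_right f).neg_right.exists_add_pow_prime_pow_eq hp e
  have htors : (p : AddMonoid.End (Additive M)) (.ofMul x) = 0 := by
    rw [AddMonoid.End.natCast_apply, ← ofMul_pow, hx]; rfl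
  have hfix : (f ^ p ^ e) (.ofMul x) = .ofMul x := by
    rw [AddMonoid.End.coe_pow]; exact congrArg Additive.ofMul hψx
  have key : ((f - 1) ^ p ^ e) (.ofMul x) = 0 := by
    rw [sub_eq_add_neg, hr, hodd.pow.neg_one_pow, mul_assoc, mul_assoc,
      (Nat.cast_commute _ _).eq]
    change (f ^ p ^ e) _ + -(Additive.ofMul x) + (f * (-1 * r)) ((p : AddMonoid.End _) _) = 0
    rw [hfix, htors, map_zero, add_zero, add_neg_cancel]
  rw [AddMonoid.End.coe_pow] at key
  exact key

theorem IsPGroup.pow_eq_one_of_card_le {G : Type*} [Group G] {p n : ℕ} [Fact p.Prime]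
    {H : Subgroup G} [Finite H] (hH : IsPGroup p H) (hcard : Nat.card H ≤ p ^ n) {x : G}
    (hx : x ∈ H) : x ^ p ^ n = 1 := by
  obtain ⟨m, hm⟩ := hH.exists_card_eq
  have hmn : m ≤ n := (Nat.pow_le_pow_iff_right (Fact.out : p.Prime).one_lt).1 (hm ▸ hcard)
  exact orderOf_dvd_iff_pow_eq_one.1
    ((H.orderOf_dvd_natCard hx).trans (hm ▸ Nat.pow_dvd_pow p hmn))

section Group

variable {G : Type*} [Group G]

theorem exists_mulEquiv_twistedClassAut_eq_range_s18 [Finite G] (δ : G → G)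
    (hδ : ∀ g h, δ (g * h) = h⁻¹ * δ g * h * δ h) (hker : ∀ g, g * δ g = 1 → g = 1) :
    ∃ σ : G ≃* G, twistedClassAut σ = Set.range δ := by
  have hδ1 : δ 1 = 1 := by simpa using hδ 1 1
  let f : G →* G :=
    { toFun := fun g => g * δ g
      map_one' := by simp [hδ1]
      map_mul' := fun g h => by simp only [hδ]; group }
  have hf : Function.Injective f := (injective_iff_map_eq_one f).2 hker
  refine ⟨MulEquiv.ofBijective f (Finite.injective_iff_bijective.1 hf), ?_⟩
  ext y
  simp [twistedClassAut, f, eq_comm]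

theorem inv_pow_mul_pow_add (t s : G) (i j : ℕ) :
    (t ^ (i + j))⁻¹ * s ^ (i + j) =
      (t ^ j)⁻¹ * ((t ^ i)⁻¹ * s ^ i) * t ^ j * ((t ^ j)⁻¹ * s ^ j) := by
  rw [pow_add, pow_add]; group

theorem inv_pow_mul_mul_pow_eq {t a x : G} (hconj : t⁻¹ * a * t = a * x)
    (hx : t⁻¹ * x * t = x) (hax : Commute a x) (i : ℕ) :
    (t ^ i)⁻¹ * (t * a) ^ i = a ^ i * x ^ i.choose 2 := by
  have hψ : ∀ y, t⁻¹ * y * t = MulAut.conj t⁻¹ y := fun y => by simp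
  induction i with
  | zero => simp
  | succ i ih =>
    calc (t ^ (i + 1))⁻¹ * (t * a) ^ (i + 1) = t⁻¹ * ((t ^ i)⁻¹ * (t * a) ^ i) * t * a := by
          rw [pow_succ, pow_succ]; group
      _ = (t⁻¹ * a * t) ^ i * (t⁻¹ * x * t) ^ i.choose 2 * a := by
          rw [ih, hψ, hψ, hψ, map_mul, map_pow, map_pow]
      _ = a ^ i * (x ^ i * x ^ i.choose 2) * a := by
          rw [hconj, hx, hax.mul_pow, mul_assoc (a ^ i)]
      _ = a ^ (i + 1) * x ^ (i + 1).choose 2 := by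
          rw [mul_assoc, ((hax.pow_right _).mul_right (hax.pow_right _)).eq.symm, ← mul_assoc,
            ← pow_succ, ← pow_add, Nat.choose_succ_succ', Nat.choose_one_right]

end Group

section NormalAbelian

variable {G : Type*} [Group G] {A : Subgroup G}

theorem conj_eq_self_of_mem [IsMulCommutative A] {c y : G} (hc : c ∈ A) (hy : y ∈ A) :
    c⁻¹ * y * c = y := by
  rw [mul_assoc, setLike_mul_comm hy hc, inv_mul_cancel_left]

theorem inv_pow_mul_pow_mem [A.Normal] {t s : G} (hts : t⁻¹ * s ∈ A) (i : ℕ) :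
    (t ^ i)⁻¹ * s ^ i ∈ A := by
  rw [← QuotientGroup.eq, QuotientGroup.mk_pow, QuotientGroup.mk_pow, QuotientGroup.eq.2 hts]

variable [A.Normal] [IsMulCommutative A]

theorem conj_eq_of_inv_mul_mem {u h y : G} (hh : u⁻¹ * h ∈ A) (hy : y ∈ A) :
    h⁻¹ * y * h = u⁻¹ * y * u :=
  calc h⁻¹ * y * h = (u⁻¹ * h)⁻¹ * (u⁻¹ * y * u) * (u⁻¹ * h) := by group
    _ = u⁻¹ * y * u := conj_eq_self_of_mem hh (by simpa using ‹A.Normal›.conj_mem y hy u⁻¹)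

theorem inv_mul_conj_mul (t : G) {a b : G} (ha : a ∈ A) (hb : b ∈ A) :
    (a * b)⁻¹ * (t⁻¹ * (a * b) * t) = a⁻¹ * (t⁻¹ * a * t) * (b⁻¹ * (t⁻¹ * b * t)) := by
  have hθa : a⁻¹ * (t⁻¹ * a * t) ∈ A :=
    A.mul_mem (A.inv_mem ha) (by simpa using ‹A.Normal›.conj_mem a ha t⁻¹)
  calc (a * b)⁻¹ * (t⁻¹ * (a * b) * t) = b⁻¹ * (a⁻¹ * (t⁻¹ * a * t)) * (t⁻¹ * b * t) := by group
    _ = a⁻¹ * (t⁻¹ * a * t) * b⁻¹ * (t⁻¹ * b * t) := by rw [setLike_mul_comm (A.inv_mem hb) hθa]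
    _ = a⁻¹ * (t⁻¹ * a * t) * (b⁻¹ * (t⁻¹ * b * t)) := by group

theorem inv_mul_conj_pow (t : G) {a : G} (ha : a ∈ A) (k : ℕ) :
    (a ^ k)⁻¹ * (t⁻¹ * a ^ k * t) = (a⁻¹ * (t⁻¹ * a * t)) ^ k := by
  induction k with
  | zero => simp
  | succ k ih => rw [pow_succ, inv_mul_conj_mul t (A.pow_mem ha k) ha, ih, pow_succ]

variable {t s : G}

theorem periodic_inv_pow_mul_pow (hts : t⁻¹ * s ∈ A)
    (hN : s ^ orderOf (t : G ⧸ A) = t ^ orderOf (t : G ⧸ A)) :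
    Function.Periodic (fun i => (t ^ i)⁻¹ * s ^ i) (orderOf (t : G ⧸ A)) := by
  intro i
  have htN : t ^ orderOf (t : G ⧸ A) ∈ A := by
    rw [← QuotientGroup.eq_one_iff, QuotientGroup.mk_pow, pow_orderOf_eq_one]
  simp only [inv_pow_mul_pow_add, hN, inv_mul_cancel, mul_one]
  exact conj_eq_self_of_mem htN (inv_pow_mul_pow_mem hts i)

theorem inv_pow_mul_pow_eq_of_pow_eq (hts : t⁻¹ * s ∈ A)
    (hN : s ^ orderOf (t : G ⧸ A) = t ^ orderOf (t : G ⧸ A)) {i j : ℕ}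
    (hij : (t : G ⧸ A) ^ i = (t : G ⧸ A) ^ j) : (t ^ i)⁻¹ * s ^ i = (t ^ j)⁻¹ * s ^ j :=
  have hper := periodic_inv_pow_mul_pow hts hN
  (hper.map_mod_nat i).symm.trans
    ((congrArg (fun i => (t ^ i)⁻¹ * s ^ i) (pow_eq_pow_iff_modEq.1 hij)).trans
      (hper.map_mod_nat j))

variable [Finite G]

theorem exists_mulEquiv_twistedClassAut_eq_range_inv_pow_mul_pow
    (ht : Subgroup.zpowers (t : G ⧸ A) = ⊤) (hts : t⁻¹ * s ∈ A)
    (hN : s ^ orderOf (t : G ⧸ A) = t ^ orderOf (t : G ⧸ A)) :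
    ∃ σ : G ≃* G, twistedClassAut σ = Set.range fun i : ℕ => (t ^ i)⁻¹ * s ^ i := by
  have hm : ∀ {i j : ℕ}, (t : G ⧸ A) ^ i = (t : G ⧸ A) ^ j →
      (t ^ i)⁻¹ * s ^ i = (t ^ j)⁻¹ * s ^ j :=
    inv_pow_mul_pow_eq_of_pow_eq hts hN
  -- `k g` is a discrete logarithm of `gA` to the base `tA`; `σ g = g · t⁻ᵏ sᵏ` with `k = k g`.
  choose k hk using fun g : G => (Submonoid.mem_powers_iff _ _).1
    (mem_powers_iff_mem_zpowers.2 (ht ▸ Subgroup.mem_top (g : G ⧸ A)))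
  have hkA : ∀ g, (t ^ k g)⁻¹ * g ∈ A := fun g =>
    QuotientGroup.eq.1 (by rw [QuotientGroup.mk_pow, hk])
  obtain ⟨σ, hσ⟩ := exists_mulEquiv_twistedClassAut_eq_range_s18 (fun g => (t ^ k g)⁻¹ * s ^ k g)
    (fun g h => by
      rw [hm (j := k g + k h) (by rw [hk, pow_add, hk, hk, QuotientGroup.mk_mul]),
        inv_pow_mul_pow_add, conj_eq_of_inv_mul_mem (hkA h) (inv_pow_mul_pow_mem hts _)])
    (fun g hg => by
      have hgA : g ∈ A := by
        rw [eq_inv_of_mul_eq_one_left hg]; exact A.inv_mem (inv_pow_mul_pow_mem hts _)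
      rwa [hm (j := 0) (by rw [hk, pow_zero, QuotientGroup.eq_one_iff]; exact hgA), pow_zero,
        pow_zero, inv_one, one_mul, mul_one] at hg)
  refine ⟨σ, hσ.trans (Set.Subset.antisymm ?_ ?_)⟩
  · rintro _ ⟨g, rfl⟩
    exact ⟨k g, rfl⟩
  · rintro _ ⟨i, rfl⟩
    exact ⟨t ^ i, hm (by rw [hk, QuotientGroup.mk_pow])⟩

theorem natCard_twistedClassAut_conj_le {a : G} (ha : a ∈ A) :
    Nat.card (twistedClassAut (MulAut.conj a)) ≤ Nat.card (G ⧸ A) := by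
  set f : G → G := fun g => g⁻¹ * (a * g * a⁻¹)
  have hf : ∀ g, ∀ c ∈ A, f (g * c) = f g := fun g c hc => by
    have hconj : c⁻¹ * (g⁻¹ * a * g) * c = g⁻¹ * a * g :=
      conj_eq_self_of_mem hc (by simpa using ‹A.Normal›.conj_mem a ha g⁻¹)
    calc f (g * c) = c⁻¹ * (g⁻¹ * a * g) * c * a⁻¹ := by simp only [f]; group
      _ = f g := by rw [hconj]; simp only [f]; group
  have hrange : twistedClassAut (MulAut.conj a) = Set.range fun q : G ⧸ A => f q.out := by
    ext y
    simp only [twistedClassAut, MulAut.conj_apply, Set.mem_ofPred_eq, Set.mem_range]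
    refine ⟨fun ⟨g, hg⟩ => ⟨(g : G ⧸ A), ?_⟩, fun ⟨q, hq⟩ => ⟨q.out, hq.symm⟩⟩
    obtain ⟨c, hc⟩ := QuotientGroup.mk_out_eq_mul A g
    rw [hg, hc, hf g c c.2]
  rw [hrange]
  exact Finite.card_range_le _

variable {p n : ℕ}

theorem inv_mul_conj_pow_eq_one (hp : p.Prime) (hpA : IsPGroup p A)
    (hcard : Nat.card (G ⧸ A) = p ^ n)
    (h : ∀ φ : G ≃* G, ∃ H : Subgroup G, (H : Set G) = twistedClassAut φ) {a : G} (ha : a ∈ A) :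
    (a⁻¹ * (t⁻¹ * a * t)) ^ p ^ n = 1 := by
  have := Fact.mk hp
  obtain ⟨H, hH⟩ := h (MulAut.conj a)
  have hconj : t⁻¹ * a * t ∈ A := by simpa using ‹A.Normal›.conj_mem a ha t⁻¹
  have hHA : H ≤ A := fun y hy => by
    obtain ⟨g, rfl⟩ : y ∈ twistedClassAut (MulAut.conj a) := hH ▸ hy
    rw [MulAut.conj_apply, ← mul_assoc, ← mul_assoc]
    exact A.mul_mem (by simpa [mul_assoc] using ‹A.Normal›.conj_mem a ha g⁻¹) (A.inv_mem ha)
  have hcardH : Nat.card H ≤ p ^ n := by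
    rw [← hcard, ← SetLike.coe_sort_coe, hH]; exact natCard_twistedClassAut_conj_le ha
  have hθH : a⁻¹ * (t⁻¹ * a * t) ∈ H := by
    rw [← SetLike.mem_coe, hH, setLike_mul_comm (A.inv_mem ha) hconj]
    exact ⟨t, by simp [mul_assoc]⟩
  exact (hpA.to_le hHA).pow_eq_one_of_card_le hcardH hθH

theorem eq_one_of_conj_eq_mul (hp : p.Prime) (hodd : Odd p) (hn : n ≠ 0)
    (ht : Subgroup.zpowers (t : G ⧸ A) = ⊤) (hord : orderOf (t : G ⧸ A) = p ^ n)
    (h : ∀ φ : G ≃* G, ∃ H : Subgroup G, (H : Set G) = twistedClassAut φ)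
    {a x : G} (ha : a ∈ A) (hap : a ^ p = 1) (hconj : t⁻¹ * a * t = a * x)
    (hx : t⁻¹ * x * t = x) : x = 1 := by
  by_contra hx1
  have := Fact.mk hp
  have hψ : ∀ y, t⁻¹ * y * t = MulAut.conj t⁻¹ y := fun y => by simp
  have hxA : x ∈ A := by
    rw [eq_inv_mul_of_mul_eq hconj.symm]
    exact A.mul_mem (A.inv_mem ha) (by simpa using ‹A.Normal›.conj_mem a ha t⁻¹)
  have hax : Commute a x := setLike_mul_comm ha hxA
  have hxp : x ^ p = 1 :=
    calc x ^ p = (t⁻¹ * a * t) ^ p := by rw [hconj, hax.mul_pow, hap, one_mul]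
      _ = 1 := by rw [hψ, ← map_pow, hap, map_one]
  have hordx : orderOf x = p := orderOf_eq_prime hxp hx1
  have hpow_eq_one : ∀ {y : G} {k : ℕ}, y ^ p = 1 → p ∣ k → y ^ k = 1 := fun hy hk =>
    orderOf_dvd_iff_pow_eq_one.1 ((orderOf_dvd_of_pow_eq_one hy).trans hk)
  have hm := inv_pow_mul_mul_pow_eq hconj hx hax
  have hN : (t * a) ^ orderOf (t : G ⧸ A) = t ^ orderOf (t : G ⧸ A) := by
    have h2 : 2 ≠ p ^ n := fun h2 => Nat.not_even_iff_odd.2 hodd.pow (h2 ▸ even_two)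
    rw [eq_comm, ← inv_mul_eq_one, hm, hord, hpow_eq_one hap (dvd_pow_self p hn),
      hpow_eq_one hxp (hp.dvd_choose_pow two_ne_zero h2), one_mul]
  obtain ⟨σ, hσ⟩ := exists_mulEquiv_twistedClassAut_eq_range_inv_pow_mul_pow ht
    (by simpa using ha) hN
  obtain ⟨H, hH⟩ := h σ
  have hHm : ∀ y, y ∈ H ↔ ∃ i : ℕ, a ^ i * x ^ i.choose 2 = y := fun y => by
    rw [← SetLike.mem_coe, hH, hσ, Set.mem_range]; simp only [hm]
  have haH : a ∈ H := (hHm a).2 ⟨1, by simp⟩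
  obtain ⟨i, hi⟩ := (hHm _).1 (H.mul_mem haH haH)
  have hxi : x ^ i = x ^ 2 := by
    have hconj_i : t⁻¹ * (a ^ i * x ^ i.choose 2) * t = t⁻¹ * (a * a) * t := by rw [hi]
    rw [hψ, hψ, map_mul, map_mul, map_pow, map_pow, ← hψ, ← hψ, hconj, hx, hax.mul_pow] at hconj_i
    refine mul_left_cancel (a := a * a) ?_
    calc a * a * x ^ i = a ^ i * x ^ i * x ^ i.choose 2 := by
          rw [← hi, mul_assoc, mul_assoc, (Commute.pow_pow_self x _ _).eq]
      _ = a * x * (a * x) := hconj_i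
      _ = a * a * x ^ 2 := by rw [mul_assoc, ← mul_assoc x, ← hax.eq, sq]; group
  have hi2 : i ≡ 2 [MOD p] := hordx ▸ pow_eq_pow_iff_modEq.1 hxi
  have hai : a ^ i = a ^ 2 := pow_eq_pow_iff_modEq.2 (hi2.of_dvd (orderOf_dvd_of_pow_eq_one hap))
  rw [hai, sq, mul_eq_left] at hi
  exact Nat.not_dvd_choose_two_of_modEq_two hp hodd hi2 (hordx ▸ orderOf_dvd_of_pow_eq_one hi)

open IsMulCommutative in
theorem conj_eq_self_of_pow_prime_eq_one (hp : p.Prime) (hodd : Odd p) (hn : n ≠ 0)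
    (ht : Subgroup.zpowers (t : G ⧸ A) = ⊤) (hord : orderOf (t : G ⧸ A) = p ^ n)
    (h : ∀ φ : G ≃* G, ∃ H : Subgroup G, (H : Set G) = twistedClassAut φ)
    {a : G} (ha : a ∈ A) (hap : a ^ p = 1) : t⁻¹ * a * t = a := by
  let ψ : A →* A := (MulAut.conjNormal t⁻¹).toMonoidHom
  have hψ : ∀ y : A, (ψ y : G) = t⁻¹ * y * t := fun y => by simp [ψ]
  have hψ_iterate : ∀ k (y : A), (ψ^[k] y : G) = (t ^ k)⁻¹ * y * t ^ k := fun k => by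
    induction k with
    | zero => simp
    | succ k ih => intro y; rw [Function.iterate_succ_apply', hψ, ih, pow_succ]; group
  let D : A →* A := ψ / MonoidHom.id A
  have hD : ∀ y : A, (ψ y : G) = y * D y := fun y => by
    rw [← Subgroup.coe_mul, MonoidHom.div_apply, MonoidHom.id_apply, mul_div_cancel]
  set y : A := ⟨a, ha⟩
  have hyp : y ^ p = 1 := Subtype.ext (by simpa using hap)
  have hfix : ψ^[p ^ n] y = y := Subtype.ext <| by
    rw [hψ_iterate, ← hord]
    exact conj_eq_self_of_mem (by rw [← QuotientGroup.eq_one_iff, QuotientGroup.mk_pow,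
      pow_orderOf_eq_one]) ha
  by_contra hne
  obtain ⟨j, hDb, hDDb⟩ := exists_iterate_apply_ne_and_apply_apply_eq (map_one D)
    (iterate_div_id_eq_one_of_pow_prime_eq_one hp hodd ψ n hyp hfix)
    (fun hDa => hne ((hψ y).symm.trans (by rw [hD, hDa, OneMemClass.coe_one, mul_one])))
  set b := D^[j] y
  have hbp : b ^ p = 1 := by rw [← iterate_map_pow, hyp, iterate_map_one]
  refine hDb (Subtype.ext (eq_one_of_conj_eq_mul hp hodd hn ht hord h b.2
    (by simpa using congrArg Subtype.val hbp) (by rw [← hψ, hD]) ?_))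
  rw [← hψ, hD, hDDb, OneMemClass.coe_one, mul_one]

theorem inv_mul_conj_pow_pred_eq_one (hp : p.Prime) (hodd : Odd p) (hn : n ≠ 0)
    (ht : Subgroup.zpowers (t : G ⧸ A) = ⊤) (hord : orderOf (t : G ⧸ A) = p ^ n)
    (h : ∀ φ : G ≃* G, ∃ H : Subgroup G, (H : Set G) = twistedClassAut φ)
    {k : ℕ} (hk : 1 ≤ k) {a : G} (ha : a ∈ A) (hak : a ^ p ^ k = 1) :
    (a⁻¹ * (t⁻¹ * a * t)) ^ p ^ (k - 1) = 1 := by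
  induction k, hk using Nat.le_induction generalizing a with
  | base =>
    rw [conj_eq_self_of_pow_prime_eq_one hp hodd hn ht hord h ha (by simpa using hak)]
    simp
  | succ k hk ih =>
    have := ih (A.pow_mem ha p) (by rwa [← pow_mul, ← pow_succ'])
    rwa [inv_mul_conj_pow t ha, ← pow_mul, ← pow_succ', Nat.sub_add_cancel hk] at this

end NormalAbelian

theorem stmt_18 {G : Type*} [Group G] [Finite G] (p : ℕ) (hp : p.Prime) (hodd : Odd p)
    (A : Subgroup G) (hA : A.Normal) (hpgroup : IsPGroup p A)
    (hcomm : ∀ a ∈ A, ∀ b ∈ A, a * b = b * a)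
    (n : ℕ) (hcard : Nat.card (G ⧸ A) = p ^ n)
    (t : G) (ht : Subgroup.zpowers (QuotientGroup.mk t : G ⧸ A) = ⊤)
    (h : ∀ φ : G ≃* G, ∃ H : Subgroup G, (H : Set G) = twistedClassAut φ)
    (θ : G → G) (hθ : ∀ a : G, θ a = a⁻¹ * (t⁻¹ * a * t)) :
    (∀ a ∈ A, θ a ∈ A) ∧
    (∀ a ∈ A, ∀ b ∈ A, θ (a * b) = θ a * θ b) ∧
    (∀ a ∈ A, θ a ^ p ^ n = 1) ∧
    (∀ k : ℕ, 1 ≤ k → k ≤ n → ∀ a ∈ A, a ^ p ^ k = 1 → θ a ^ p ^ (k - 1) = 1) := by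
  have : IsMulCommutative A := .of_setLike_mul_comm hcomm
  have hord : orderOf (t : G ⧸ A) = p ^ n := by
    rw [← Nat.card_zpowers, ht, Subgroup.card_top, hcard]
  obtain rfl : θ = fun a => a⁻¹ * (t⁻¹ * a * t) := funext hθ
  refine ⟨fun a ha => ?_, fun a ha b hb => inv_mul_conj_mul t ha hb,
    fun a ha => inv_mul_conj_pow_eq_one hp hpgroup hcard h ha,
    fun k hk hkn a ha hak => inv_mul_conj_pow_pred_eq_one hp hodd (by omega) ht hord h hk ha hak⟩
  exact A.mul_mem (A.inv_mem ha) (by simpa using hA.conj_mem a ha t⁻¹)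
end

section
/- Let n be an odd positive integer with prime factorization n = p₁^{n₁} ⋯ p_m^{n_m} (the p_i distinct primes), let A be a finite abelian group, and let G be a finite group with a normal subgroup isomorphic to A whose quotient is cyclic of order n. If for every automorphism φ of G the twisted conjugacy class [e]_φ = {g⁻¹·φ(g) : g ∈ G} is a subgroup of G, then G is nilpotent of nilpotency class at most max{n₁, …, n_m} + 1. -/
open scoped IsMulCommutative commutatorElement

theorem Subgroup.eq_top_of_forall_sylow_le {G : Type*} [Group G] [Finite G] {H : Subgroup G}
    (h : ∀ (p : ℕ) [Fact p.Prime] (P : Sylow p G), (P : Subgroup G) ≤ H) : H = ⊤ := by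
  refine H.eq_top_of_card_eq (Nat.dvd_antisymm H.card_subgroup_dvd_card ?_)
  refine (Nat.factorization_prime_le_iff_dvd Nat.card_pos.ne' Nat.card_pos.ne').mp fun p hp => ?_
  have := Fact.mk hp
  have hP := Subgroup.card_dvd_of_le (h p default)
  rw [Sylow.card_eq_multiplicity] at hP
  exact (hp.pow_dvd_iff_le_factorization Nat.card_pos.ne').mp hP

lemma Nat.factorization_prod_pow_le_sup {ι : Type*} [Fintype ι] {p e : ι → ℕ}
    (hp : ∀ i, (p i).Prime) (hinj : Function.Injective p) (q : ℕ) :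
    (∏ i, p i ^ e i).factorization q ≤ Finset.univ.sup e := by
  rw [Nat.factorization_prod fun i _ => pow_ne_zero _ (hp i).ne_zero, Finset.sum_apply']
  by_cases hq : ∃ i, p i = q
  · obtain ⟨i, rfl⟩ := hq
    rw [Finset.sum_eq_single i]
    · simpa [(hp i).factorization_self] using Finset.le_sup (Finset.mem_univ i)
    · intro j _ hji
      simp [(hp j).factorization, hinj.ne hji]
    · simp
  · simp only [not_exists] at hq
    simp [(hp _).factorization, hq]

namespace MulAut

section Group

variable {M N : Type*} [Group M] [Group N]

lemma map_zpow_apply {F : Type*} [FunLike F M N] {σ : MulAut M} {τ : MulAut N} {f : F}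
    (hf : ∀ x, f (σ x) = τ (f x)) (i : ℤ) (x : M) : f ((σ ^ i) x) = (τ ^ i) (f x) := by
  induction i using Int.induction_on generalizing x with
  | zero => rfl
  | succ i ih => rw [zpow_add_one, zpow_add_one, mul_apply, mul_apply, ih, hf]
  | pred i ih =>
    rw [zpow_sub_one, zpow_sub_one, mul_apply, mul_apply, ih]
    conv_rhs => rw [← apply_inv_self _ σ x, hf, inv_apply_self]

lemma subgroup_map_eq_self_iff {σ : MulAut M} {H : Subgroup M} :
    H.map (σ : M →* M) = H ↔ ∀ (j : ℤ), ∀ x ∈ H, (σ ^ j) x ∈ H := by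
  constructor
  · intro hH j
    have hσ : ∀ x ∈ H, σ x ∈ H := fun x hx => hH ▸ Subgroup.mem_map_of_mem _ hx
    have hσinv : ∀ x ∈ H, σ⁻¹ x ∈ H := by
      intro x hx
      rw [← hH] at hx
      obtain ⟨y, hy, rfl⟩ := hx
      simpa using hy
    induction j using Int.induction_on with
    | zero => simp
    | succ i ih => intro x hx; rw [zpow_add_one, mul_apply]; exact ih _ (hσ x hx)
    | pred i ih => intro x hx; rw [zpow_sub_one, mul_apply]; exact ih _ (hσinv x hx)
  · intro h
    ext x
    refine ⟨fun ⟨y, hy, hyx⟩ => hyx ▸ by simpa using h 1 y hy, fun hx => ⟨σ⁻¹ x, ?_, by simp⟩⟩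
    simpa using h (-1) x hx

lemma map_range_eq_self {σ : MulAut M} {f : M →* M} (hf : ∀ x, f (σ x) = σ (f x)) :
    f.range.map (σ : M →* M) = f.range := by
  rw [MonoidHom.map_range]
  ext y
  constructor
  · rintro ⟨x, rfl⟩
    exact ⟨σ x, by simp [hf]⟩
  · rintro ⟨x, rfl⟩
    exact ⟨σ⁻¹ x, by simp [← hf]⟩

lemma zpow_apply_div_mem {σ : MulAut M} {H : Subgroup M} (hH : H.map (σ : M →* M) = H) {x : M}
    (hx : σ x / x ∈ H) (i : ℤ) : (σ ^ i) x / x ∈ H := by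
  have stab := subgroup_map_eq_self_iff.mp hH
  induction i using Int.induction_on with
  | zero => simp
  | succ i ih =>
    rw [← div_mul_div_cancel _ ((σ ^ (i : ℤ)) x), zpow_add_one, mul_apply, ← map_div]
    exact mul_mem (stab _ _ hx) ih
  | pred i ih =>
    have hinv : σ⁻¹ x / x = (σ ^ (-1 : ℤ)) (σ x / x)⁻¹ := by
      rw [zpow_neg_one, inv_div, map_div, inv_apply_self]
    rw [← div_mul_div_cancel _ ((σ ^ (-(i : ℤ))) x), zpow_sub_one, mul_apply, ← map_div, hinv]
    exact mul_mem (stab _ _ (stab _ _ (inv_mem hx))) ih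

def restrict (σ : MulAut M) (H : Subgroup M) (hH : H.map (σ : M →* M) = H) : MulAut H :=
  (σ.subgroupMap H).trans (MulEquiv.subgroupCongr hH)

lemma coe_restrict_zpow_apply {σ : MulAut M} {H : Subgroup M} {hH : H.map (σ : M →* M) = H}
    (i : ℤ) (x : H) : ((σ.restrict H hH ^ i) x : M) = (σ ^ i) x :=
  map_zpow_apply (f := H.subtype) (fun _ => rfl) i x

lemma restrict_pow_eq_one {σ : MulAut M} {H : Subgroup M} {hH : H.map (σ : M →* M) = H} {n : ℕ}
    (hσ : σ ^ n = 1) : σ.restrict H hH ^ n = 1 :=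
  MulEquiv.ext fun x => Subtype.ext <| by
    rw [← zpow_natCast, coe_restrict_zpow_apply, zpow_natCast, hσ]
    rfl

def orbitDiv (σ : MulAut M) (x : M) : Set M := Set.range fun i : ℤ => (σ ^ i) x / x

def OrbitDivSubgroups (σ : MulAut M) : Prop :=
  ∀ x, ∃ S : Subgroup M, (S : Set M) = orbitDiv σ x

lemma image_orbitDiv {F : Type*} [FunLike F M N] [MonoidHomClass F M N] {σ : MulAut M}
    {τ : MulAut N} {f : F} (hf : ∀ x, f (σ x) = τ (f x)) (x : M) :
    f '' orbitDiv σ x = orbitDiv τ (f x) := by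
  simp only [orbitDiv, ← Set.range_comp, Function.comp_def, map_div, map_zpow_apply hf]

lemma OrbitDivSubgroups.map {F : Type*} [FunLike F M N] [MonoidHomClass F M N] {σ : MulAut M}
    {τ : MulAut N} {f : F} (hf : ∀ x, f (σ x) = τ (f x)) (hsurj : Function.Surjective f)
    (h : σ.OrbitDivSubgroups) : τ.OrbitDivSubgroups := by
  intro y
  obtain ⟨x, rfl⟩ := hsurj y
  obtain ⟨S, hS⟩ := h x
  exact ⟨S.map (f : M →* N), by rw [Subgroup.coe_map, hS, MonoidHom.coe_coe, image_orbitDiv hf]⟩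

lemma OrbitDivSubgroups.restrict {σ : MulAut M} {H : Subgroup M} (hH : H.map (σ : M →* M) = H)
    (h : σ.OrbitDivSubgroups) : (σ.restrict H hH).OrbitDivSubgroups := by
  intro x
  obtain ⟨S, hS⟩ := h x
  refine ⟨S.comap H.subtype, ?_⟩
  rw [Subgroup.coe_comap, hS, show (x : M) = H.subtype x from rfl,
    ← image_orbitDiv (f := H.subtype) (σ := σ.restrict H hH) (fun _ => rfl),
    Set.preimage_image_eq _ H.subtype_injective]

lemma orbit_zpowers_eq_range (σ : MulAut M) (x : M) :
    MulAction.orbit (Subgroup.zpowers σ) x = Set.range fun i : ℤ => (σ ^ i) x := by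
  ext y
  simp [MulAction.mem_orbit_iff, Subgroup.exists_zpowers, Subgroup.smul_def]

lemma card_orbitDiv (σ : MulAut M) (x : M) :
    Nat.card (orbitDiv σ x) = MulAction.period σ x := by
  have h : orbitDiv σ x = (· / x) '' MulAction.orbit (Subgroup.zpowers σ) x := by
    rw [orbit_zpowers_eq_range, ← Set.range_comp]
    rfl
  rw [h, Nat.card_image_of_injective div_left_injective,
    Nat.card_congr (MulAction.orbitZPowersEquiv σ x), Nat.card_zmod]
  rfl

lemma map_eq_of_coe_eq_orbitDiv {σ : MulAut M} {x : M} {S : Subgroup M}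
    (hS : (S : Set M) = orbitDiv σ x) : S.map (σ : M →* M) = S := by
  have mem : ∀ i : ℤ, (σ ^ i) x / x ∈ S := fun i => by rw [← SetLike.mem_coe, hS]; exact ⟨i, rfl⟩
  refine subgroup_map_eq_self_iff.mpr fun j y hy => ?_
  rw [← SetLike.mem_coe, hS] at hy
  obtain ⟨i, rfl⟩ := hy
  rw [map_div, ← mul_apply, ← zpow_add, ← div_div_div_cancel_right _ _ x]
  exact div_mem (mem _) (mem _)

end Group

section CommGroup

variable {M : Type*} [CommGroup M]

def displacement (σ : MulAut M) : Monoid.End M where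
  toFun x := σ x / x
  map_one' := by simp
  map_mul' x y := by simp only [map_mul]; exact mul_div_mul_comm _ _ _ _

@[simp] lemma displacement_apply (σ : MulAut M) (x : M) : displacement σ x = σ x / x := rfl

lemma displacement_apply_map {F : Type*} [FunLike F M M] [MonoidHomClass F M M] {σ : MulAut M}
    {f : F} (hf : ∀ x, f (σ x) = σ (f x)) (x : M) :
    displacement σ (f x) = f (displacement σ x) := by
  simp [hf]

lemma displacement_apply_apply (σ : MulAut M) (x : M) :
    displacement σ (σ x) = σ (displacement σ x) :=
  displacement_apply_map (f := σ) (fun _ => rfl) x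

lemma map_displacement_pow_apply {N : Type*} [CommGroup N] {F : Type*} [FunLike F M N]
    [MonoidHomClass F M N] {σ : MulAut M} {τ : MulAut N} {f : F} (hf : ∀ x, f (σ x) = τ (f x))
    (k : ℕ) (x : M) : f ((displacement σ ^ k) x) = (displacement τ ^ k) (f x) := by
  induction k with
  | zero => rfl
  | succ k ih =>
    rw [pow_succ', pow_succ', Monoid.End.coe_mul, Monoid.End.coe_mul, Function.comp_apply,
      Function.comp_apply, ← ih]
    simp [hf]

lemma card_eq_period_displacement_mul {σ : MulAut M} {m : M} {S : Subgroup M}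
    (hS : (S : Set M) = orbitDiv σ m) :
    Nat.card S = MulAction.period σ (displacement σ m) * Nat.card (MulAction.fixedPoints
      (Subgroup.zpowers (σ.restrict S (map_eq_of_coe_eq_orbitDiv hS))) S) := by
  set τ := σ.restrict S (map_eq_of_coe_eq_orbitDiv hS)
  set ψ : S →* S := displacement τ
  have hrange : S.subtype '' Set.range ψ = orbitDiv σ (displacement σ m) := by
    rw [← image_orbitDiv (f := displacement σ) (displacement_apply_apply σ), ← hS,
      ← Set.range_comp, Set.image_eq_range]
    rfl
  have hfix : MulAction.fixedPoints (Subgroup.zpowers τ) S = (ψ.ker : Set S) := by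
    ext s
    simp only [MulAction.mem_fixedPoints, Subgroup.forall_zpowers]
    exact (MulAction.mem_fixedBy_zpowers_iff_mem_fixedBy (g := τ) (a := s)).trans div_eq_one.symm
  rw [hfix, ← card_orbitDiv, ← hrange, Nat.card_image_of_injective S.subtype_injective,
    ← MonoidHom.coe_range, SetLike.coe_sort_coe, SetLike.coe_sort_coe, ← Subgroup.index_ker,
    mul_comm, Subgroup.card_mul_index]

theorem pow_apply_displacement_eq [Finite M] {q R : ℕ} [hq : Fact q.Prime] {σ : MulAut M}
    (hσ : σ ^ q ^ (R + 1) = 1) {m : M} {S : Subgroup M} (hS : (S : Set M) = orbitDiv σ m) :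
    (σ ^ q ^ R) (displacement σ m) = displacement σ m := by
  have hcard := card_eq_period_displacement_mul hS
  set τ := σ.restrict S (map_eq_of_coe_eq_orbitDiv hS)
  suffices hper : MulAction.period σ (displacement σ m) ∣ q ^ R from
    MulAction.pow_smul_eq_iff_period_dvd.mpr hper
  have hS_dvd : Nat.card S ∣ q ^ (R + 1) := by
    rw [← SetLike.coe_sort_coe, hS, card_orbitDiv]
    exact MulAction.pow_smul_eq_iff_period_dvd.mp (by rw [hσ]; rfl)
  by_cases hqS : q ∣ Nat.card S
  · have hΓ : IsPGroup q (Subgroup.zpowers τ) := by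
      rintro ⟨_, j, rfl⟩
      refine ⟨R + 1, Subtype.ext ?_⟩
      rw [Subgroup.coe_pow, ← zpow_natCast, ← zpow_mul, mul_comm, zpow_mul, zpow_natCast,
        restrict_pow_eq_one hσ, one_zpow]
      rfl
    have hq_fix := (hΓ.card_modEq_card_fixedPoints S).symm.trans (Nat.modEq_zero_iff_dvd.mpr hqS)
    rw [pow_succ, hcard] at hS_dvd
    exact Nat.dvd_of_mul_dvd_mul_right hq.out.pos
      ((mul_dvd_mul_left _ (Nat.modEq_zero_iff_dvd.mp hq_fix)).trans hS_dvd)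
  · have hS1 : Nat.card S = 1 :=
      Nat.Coprime.eq_one_of_dvd (Nat.Coprime.pow_right _ (Nat.coprime_comm.mp
        (hq.out.coprime_iff_not_dvd.mpr hqS))) hS_dvd
    rw [hS1] at hcard
    rw [Nat.eq_one_of_mul_eq_one_right hcard.symm]
    exact one_dvd _

theorem displacement_pow_apply_eq_one_of_pow_prime_pow [Finite M] {q : ℕ} [Fact q.Prime] (r : ℕ)
    {σ : MulAut M} (h : σ.OrbitDivSubgroups) (hσ : σ ^ q ^ r = 1) (x : M) :
    (displacement σ ^ (r + 1)) x = 1 := by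
  induction r generalizing M with
  | zero =>
    rw [pow_zero, pow_one] at hσ
    simp [hσ]
  | succ r ih =>
    set ε := displacement (σ ^ q ^ r)
    have hε : ∀ x, ε (σ x) = σ (ε x) := displacement_apply_map (f := σ) fun x => by
      rw [← mul_apply, ← mul_apply, ← pow_succ', pow_succ]
    let W : Subgroup M := MonoidHom.range ε
    have hW : W.map (σ : M →* M) = W := map_range_eq_self hε
    set τ : MulAut (M ⧸ W) := QuotientGroup.congr W W σ hW
    have hπ : ∀ x, QuotientGroup.mk' W (σ x) = τ (QuotientGroup.mk' W x) := fun x =>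
      (QuotientGroup.congr_mk _ _ _ _ x).symm
    have hτ : τ ^ q ^ r = 1 := by
      ext y
      induction y using QuotientGroup.induction_on with | H y => ?_
      rw [one_apply, ← QuotientGroup.mk'_apply, ← zpow_natCast, ← map_zpow_apply hπ, zpow_natCast,
        QuotientGroup.mk'_apply, QuotientGroup.mk'_apply, QuotientGroup.eq_iff_div_mem]
      exact ⟨y, rfl⟩
    have hW_mem : (displacement σ ^ (r + 1)) x ∈ W := by
      rw [← QuotientGroup.eq_one_iff, ← QuotientGroup.mk'_apply, map_displacement_pow_apply hπ]
      exact ih (h.map hπ (QuotientGroup.mk'_surjective W)) hτ _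
    obtain ⟨m, hm⟩ := hW_mem
    change ε m = _ at hm
    obtain ⟨S, hS⟩ := h m
    rw [pow_succ', Monoid.End.coe_mul, Function.comp_apply, ← hm, displacement_apply_map hε,
      displacement_apply, pow_apply_displacement_eq hσ hS, div_self']

lemma pow_prime_pow_factorization_eq_one [Finite M] {q : ℕ} [hq : Fact q.Prime]
    (hM : IsPGroup q M) {σ : MulAut M} (h : σ.OrbitDivSubgroups) {n : ℕ} (hn : n ≠ 0)
    (hσ : σ ^ n = 1) : σ ^ q ^ n.factorization q = 1 := by
  refine MulEquiv.ext fun x => ?_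
  obtain ⟨S, hS⟩ := h x
  obtain ⟨k, hk⟩ := (hM.to_subgroup S).exists_card_eq
  have hper : MulAction.period σ x = q ^ k := by
    rw [← hk, ← card_orbitDiv, ← hS]
    rfl
  have hdvd : q ^ k ∣ n := hper ▸ MulAction.pow_smul_eq_iff_period_dvd.mp (by rw [hσ]; rfl)
  have hk_le : k ≤ n.factorization q := (hq.out.pow_dvd_iff_le_factorization hn).mp hdvd
  exact MulAction.pow_smul_eq_iff_period_dvd.mpr (hper ▸ pow_dvd_pow q hk_le)

theorem displacement_pow_apply_eq_one [Finite M] {σ : MulAut M} (h : σ.OrbitDivSubgroups)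
    {n N : ℕ} (hn : n ≠ 0) (hσ : σ ^ n = 1) (hN : ∀ q, q.Prime → n.factorization q ≤ N) (x : M) :
    (displacement σ ^ (N + 1)) x = 1 := by
  let K : Subgroup M := MonoidHom.ker (displacement σ ^ (N + 1) : M →* M)
  suffices hK : K = ⊤ from MonoidHom.mem_ker.mp (show x ∈ K from hK ▸ Subgroup.mem_top x)
  refine Subgroup.eq_top_of_forall_sylow_le fun q hq P y hy => ?_
  have hP : (P : Subgroup M).map (σ : M →* M) = P := Subgroup.characteristic_iff_map_eq.mp
    (P.characteristic_of_normal inferInstance) σ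
  have hPσ := pow_prime_pow_factorization_eq_one P.isPGroup' (h.restrict hP) hn
    (restrict_pow_eq_one hσ)
  have hy1 := displacement_pow_apply_eq_one_of_pow_prime_pow _ (h.restrict hP) hPσ ⟨y, hy⟩
  change (displacement σ ^ (N + 1)) y = 1
  rw [← Nat.sub_add_cancel (Nat.add_le_add_right (hN q hq.out) 1), pow_add,
    Monoid.End.coe_mul, Function.comp_apply, show y = (P : Subgroup M).subtype ⟨y, hy⟩ from rfl,
    ← map_displacement_pow_apply (f := (P : Subgroup M).subtype) (σ := σ.restrict P hP)
      (fun _ => rfl), hy1, map_one, map_one]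

end CommGroup

end MulAut

namespace Subgroup

variable {G : Type*} [Group G] {A : Subgroup G} [A.Normal]

lemma coe_conjNormal_zpow_apply (t : G) (i : ℤ) (b : A) :
    ((MulAut.conjNormal t ^ i) b : G) = t ^ i * b * (t ^ i)⁻¹ := by
  rw [← map_zpow, MulAut.conjNormal_apply]

lemma commutatorElement_coe_left (z : A) (g : G) :
    ⁅(z : G), g⁆ = ((z / MulAut.conjNormal g z : A) : G) := by
  rw [commutatorElement_def, coe_div, MulAut.conjNormal_apply, div_eq_mul_inv]
  group

lemma exists_forall_eq_mul_zpow [IsCyclic (G ⧸ A)] :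
    ∃ t : G, ∀ g : G, ∃ (a : A) (i : ℤ), g = a * t ^ i := by
  obtain ⟨x, hx⟩ := IsCyclic.exists_generator (α := G ⧸ A)
  obtain ⟨t, rfl⟩ := QuotientGroup.mk_surjective x
  refine ⟨t, fun g => ?_⟩
  obtain ⟨i, hi⟩ := Subgroup.mem_zpowers_iff.mp (hx g)
  have hmem : g * (t ^ i)⁻¹ ∈ A := by
    rw [← QuotientGroup.eq_one_iff, QuotientGroup.mk_mul, QuotientGroup.mk_inv,
      QuotientGroup.mk_zpow, hi, mul_inv_cancel]
  exact ⟨⟨_, hmem⟩, i, by simp⟩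

variable [IsMulCommutative A]

lemma conjNormal_coe (a : A) : MulAut.conjNormal (a : G) = (1 : MulAut A) := by
  ext z
  rw [MulAut.conjNormal_apply, MulAut.one_apply, ← coe_mul, mul_comm, coe_mul,
    mul_inv_cancel_right]

lemma conjNormal_mul_zpow (a : A) (t : G) (i : ℤ) :
    MulAut.conjNormal ((a : G) * t ^ i) = (MulAut.conjNormal t : MulAut A) ^ i := by
  rw [map_mul, conjNormal_coe, one_mul, map_zpow]

lemma conjNormal_pow_card_quotient (t : G) :
    (MulAut.conjNormal t : MulAut A) ^ Nat.card (G ⧸ A) = 1 := by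
  have ht : t ^ Nat.card (G ⧸ A) ∈ A := by
    rw [← QuotientGroup.eq_one_iff, QuotientGroup.mk_pow, pow_card_eq_one']
  rw [← map_pow, ← conjNormal_coe ⟨_, ht⟩]

lemma commutatorElement_mul_zpow (a b : A) (t : G) (i j : ℤ) :
    ⁅(a : G) * t ^ i, (b : G) * t ^ j⁆ = ((((MulAut.conjNormal t ^ i) b / b) /
      ((MulAut.conjNormal t ^ j) a / a) : A) : G) := by
  have h : ((MulAut.conjNormal t ^ i) b / b) / ((MulAut.conjNormal t ^ j) a / a) =
      a * (MulAut.conjNormal t ^ i) b * (MulAut.conjNormal t ^ j) a⁻¹ * b⁻¹ := by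
    simp only [map_inv, div_eq_mul_inv, mul_inv, inv_inv, mul_comm, mul_left_comm, mul_assoc]
  rw [h, coe_mul, coe_mul, coe_mul, coe_conjNormal_zpow_apply, coe_conjNormal_zpow_apply,
    commutatorElement_def, coe_inv, coe_inv]
  group

lemma orbitDivSubgroups_conjNormal {t : G} (ht : ∀ g : G, ∃ (a : A) (i : ℤ), g = a * t ^ i)
    (h : ∀ φ : G ≃* G, ∃ H : Subgroup G, (H : Set G) = twistedClassAut φ) :
    (MulAut.conjNormal t : MulAut A).OrbitDivSubgroups := by
  intro a
  obtain ⟨H, hH⟩ := h (MulAut.conj (a : G))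
  refine ⟨H.comap A.subtype, ?_⟩
  have key : ∀ g : G, g⁻¹ * MulAut.conj (a : G) g = ((MulAut.conjNormal g⁻¹ a / a : A) : G) := by
    intro g
    rw [MulAut.conj_apply, coe_div, MulAut.conjNormal_apply, inv_inv, div_eq_mul_inv]
    group
  ext y
  simp only [coe_comap, hH, twistedClassAut, Set.mem_preimage, Set.mem_ofPred_eq, coe_subtype,
    MulAut.orbitDiv, Set.mem_range]
  constructor
  · rintro ⟨g, hg⟩
    obtain ⟨b, i, hgi⟩ := ht g⁻¹
    refine ⟨i, Subtype.ext ?_⟩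
    rw [hg, key, hgi, conjNormal_mul_zpow]
  · rintro ⟨i, rfl⟩
    refine ⟨t ^ (-i), ?_⟩
    rw [key, ← zpow_neg, neg_neg, map_zpow]

open MulAut in
theorem lowerCentralSeries_succ_le_map_range {t : G}
    (ht : ∀ g : G, ∃ (a : A) (i : ℤ), g = a * t ^ i) (k : ℕ) :
    (⊤ : Subgroup G).lowerCentralSeries (k + 1) ≤
      (MonoidHom.range (displacement (conjNormal t) ^ (k + 1) : A →* A)).map A.subtype := by
  set σ : MulAut A := conjNormal t
  have hmem : ∀ (j : ℕ) (z : A), z ∈ MonoidHom.range (displacement σ ^ j : A →* A) →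
      ∀ i : ℤ, (σ ^ i) z / z ∈ MonoidHom.range (displacement σ ^ (j + 1) : A →* A) := by
    rintro j z ⟨w, rfl⟩ i
    refine zpow_apply_div_mem (map_range_eq_self fun x =>
      (map_displacement_pow_apply (f := σ) (fun _ => rfl) _ x).symm) ?_ i
    exact ⟨w, by rw [pow_succ']; rfl⟩
  induction k with
  | zero =>
    rw [top_lowerCentralSeries_one, _root_.commutator_def, commutator_le]
    rintro g - h -
    obtain ⟨a, i, rfl⟩ := ht g
    obtain ⟨b, j, rfl⟩ := ht h
    rw [commutatorElement_mul_zpow]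
    exact mem_map_of_mem _ (div_mem (hmem 0 b ⟨b, rfl⟩ i) (hmem 0 a ⟨a, rfl⟩ j))
  | succ k ih =>
    rw [lowerCentralSeries_succ, commutator_le]
    rintro g₁ hg₁ g -
    obtain ⟨z, hz, rfl⟩ := ih hg₁
    obtain ⟨a, i, rfl⟩ := ht g
    rw [coe_subtype, commutatorElement_coe_left, conjNormal_mul_zpow, ← inv_div]
    exact mem_map_of_mem _ (inv_mem (hmem _ z hz i))

end Subgroup

open MulAut Subgroup in
theorem stmt_19_general {G : Type*} [Group G] [Finite G]
    (m : ℕ) (p : Fin m → ℕ) (nexp : Fin m → ℕ)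
    (hp : ∀ i, (p i).Prime) (hdist : Function.Injective p)
    (n : ℕ) (hn : n = ∏ i : Fin m, p i ^ nexp i)
    (A : Subgroup G) (hA : A.Normal)
    (hcomm : ∀ a ∈ A, ∀ b ∈ A, a * b = b * a)
    (hcyc : IsCyclic (G ⧸ A)) (hcard : Nat.card (G ⧸ A) = n)
    (h : ∀ φ : G ≃* G, ∃ H : Subgroup G, (H : Set G) = twistedClassAut φ) :
    (⊤ : Subgroup G).lowerCentralSeries (Finset.univ.sup nexp + 1) = ⊥ := by
  have : IsMulCommutative A := .of_comm fun x y => Subtype.ext (hcomm _ x.2 _ y.2)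
  obtain ⟨t, ht⟩ := exists_forall_eq_mul_zpow (A := A)
  have hδ := displacement_pow_apply_eq_one (orbitDivSubgroups_conjNormal ht h)
    (hcard ▸ Nat.card_pos.ne') (hcard ▸ conjNormal_pow_card_quotient t)
    (fun q _ => hn ▸ Nat.factorization_prod_pow_le_sup hp hdist q)
  refine eq_bot_iff.mpr ((lowerCentralSeries_succ_le_map_range ht _).trans ?_)
  rintro _ ⟨_, ⟨w, rfl⟩, rfl⟩
  exact mem_bot.mpr (congrArg Subtype.val (hδ w))

theorem stmt_19 {G : Type*} [Group G] [Finite G]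
    (m : ℕ) (p : Fin m → ℕ) (nexp : Fin m → ℕ)
    (hp : ∀ i, (p i).Prime) (hdist : Function.Injective p)
    (hnexp : ∀ i, 1 ≤ nexp i)
    (n : ℕ) (hn : n = ∏ i : Fin m, p i ^ nexp i) (hodd : Odd n)
    (A : Subgroup G) (hA : A.Normal)
    (hcomm : ∀ a ∈ A, ∀ b ∈ A, a * b = b * a)
    (hcyc : IsCyclic (G ⧸ A)) (hcard : Nat.card (G ⧸ A) = n)
    (h : ∀ φ : G ≃* G, ∃ H : Subgroup G, (H : Set G) = twistedClassAut φ) :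
    (⊤ : Subgroup G).lowerCentralSeries (Finset.univ.sup nexp + 1) = ⊥ :=
  stmt_19_general m p nexp hp hdist n hn A hA hcomm hcyc hcard h
end
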